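/- arXiv:1102.3503 — 6 statements merged into one kernel-verified Lean document; each statement's English description precedes it below -/
import Mathlib

section
/- The equivalence relation ≡_{D_{m,k}} is right invariant: for words w₁, w₂ of length ≥ 2k, if D_{m,k}(w₁) = D_{m,k}(w₂) then for every word r, D_{m,k}(w₁r) = D_{m,k}(w₂r). -/
open scoped Classical

namespace Hairpin

variable {V : Type}

/-- Reversed complement of a word under the involution `bar`. -/
def rc (bar : V → V) (w : List V) : List V := (w.map bar).reverse

/-- `w` admits a right hairpin decomposition `w = δγαβᾱ^R` with `|α| = k`, `|γ| ≤ m`. -/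
def hasRightDecomp (bar : V → V) (m k : ℕ) (w : List V) : Prop :=
  ∃ δ γ α β : List V, w = δ ++ γ ++ α ++ β ++ rc bar α ∧ α.length = k ∧ γ.length ≤ m

def hasLeftDecomp (bar : V → V) (m k : ℕ) (w : List V) : Prop :=
  ∃ α β γ δ : List V, w = α ++ β ++ rc bar α ++ γ ++ δ ∧ α.length = k ∧ γ.length ≤ m

/-- m-bounded right k-hairpin incompletion. -/
noncomputable def rHI (bar : V → V) (m k : ℕ) (w : List V) : Set (List V) :=
  if hasRightDecomp bar m k w then
    { v | ∃ δ γ α β : List V, w = δ ++ γ ++ α ++ β ++ rc bar α ∧ α.length = k ∧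
          γ.length ≤ m ∧ v = w ++ rc bar γ }
  else {w}

/-- m-bounded left k-hairpin incompletion. -/
noncomputable def lHI (bar : V → V) (m k : ℕ) (w : List V) : Set (List V) :=
  if hasLeftDecomp bar m k w then
    { v | ∃ α β γ δ : List V, w = α ++ β ++ rc bar α ++ γ ++ δ ∧ α.length = k ∧
          γ.length ≤ m ∧ v = rc bar γ ++ w }
  else {w}

/-- m-bounded k-hairpin incompletion. -/
noncomputable def HI (bar : V → V) (m k : ℕ) (w : List V) : Set (List V) :=
  rHI bar m k w ∪ lHI bar m k w

noncomputable def rHIn (bar : V → V) (m k : ℕ) (w : List V) : ℕ → Set (List V)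
  | 0 => {w}
  | n + 1 => ⋃ v ∈ rHIn bar m k w n, rHI bar m k v

noncomputable def rHIstar (bar : V → V) (m k : ℕ) (w : List V) : Set (List V) :=
  ⋃ n, rHIn bar m k w n

noncomputable def HIn (bar : V → V) (m k : ℕ) (w : List V) : ℕ → Set (List V)
  | 0 => {w}
  | n + 1 => ⋃ v ∈ HIn bar m k w n, HI bar m k v

noncomputable def HIstar (bar : V → V) (m k : ℕ) (w : List V) : Set (List V) :=
  ⋃ n, HIn bar m k w n

noncomputable def rHIstarL (bar : V → V) (m k : ℕ) (L : Set (List V)) : Set (List V) :=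
  ⋃ w ∈ L, rHIstar bar m k w

noncomputable def HIL (bar : V → V) (m k : ℕ) (L : Set (List V)) : Set (List V) :=
  ⋃ w ∈ L, HI bar m k w

noncomputable def HIstarL (bar : V → V) (m k : ℕ) (L : Set (List V)) : Set (List V) :=
  ⋃ w ∈ L, HIstar bar m k w

/-- The set `C_{m,k}(w)`. -/
def Cmk (bar : V → V) (m k : ℕ) (w : List V) : Set (List V × List V) :=
  { p | ∃ x y w₁ w₂ z : List V,
      x.length ≤ m ∧ y.length = k ∧ w = w₁ ++ (x ++ y) ++ w₂ ∧
      z.length ≤ k ∧ z <:+ w₂ ∧ z <+: rc bar y ∧ p = (x ++ y, z) }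

/-- The suffix component of `D_{m,k}(w)`: all suffixes of `w` of length `i+k-1`, `0 ≤ i ≤ m`. -/
def DmkSuf (m k : ℕ) (w : List V) : Set (List V) :=
  { s | ∃ i ≤ m, s.length = i + k - 1 ∧ s <:+ w }

noncomputable def Dmk (bar : V → V) (m k : ℕ) (w : List V) :
    Set (List V × List V) × Set (List V) :=
  (Cmk bar m k w, DmkSuf m k w)

/-- The set `C'_{m,k}(w)`. -/
def Cmk' (bar : V → V) (m k : ℕ) (w : List V) : Set (List V × List V) :=
  { p | ∃ x y w₁ w₂ z : List V,
      x.length ≤ m ∧ y.length = k ∧ w = w₁ ++ (y ++ x) ++ w₂ ∧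
      z.length ≤ k ∧ z <+: w₁ ∧ z <:+ rc bar y ∧ p = (z, y ++ x) }

/-- The prefix component of `D'_{m,k}(w)`. -/
def DmkPref (m k : ℕ) (w : List V) : Set (List V) :=
  { s | ∃ i ≤ m, s.length = i + k - 1 ∧ s <+: w }

noncomputable def Dmk' (bar : V → V) (m k : ℕ) (w : List V) :
    Set (List V × List V) × Set (List V) :=
  (Cmk' bar m k w, DmkPref m k w)

noncomputable def Emk (bar : V → V) (m k : ℕ) (w : List V) :=
  (Dmk bar m k w, Dmk' bar m k w)


/-- View a set of words as a `Language`. -/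
def lang {V : Type} (L : Set (List V)) : Language V := L


variable {V : Type} [Fintype V]


/-- Cancel a common right factor in a suffix relation. -/
lemma suffix_append_cancel {α : Type*} {a b c : List α} : a ++ c <:+ b ++ c ↔ a <:+ b := by
  constructor
  · rintro ⟨t, ht⟩
    exact ⟨t, List.append_cancel_right (by rwa [← List.append_assoc] at ht)⟩
  · rintro ⟨t, ht⟩
    exact ⟨t, by rw [← List.append_assoc, ht]⟩

/-- Any suffix of `w₁` of length at most `m + k - 1` is a suffix of `w₂`,
provided the suffix data transfers. -/
lemma sufTrans {V : Type} {m k : ℕ} (hk : 1 ≤ k) {w₁ w₂ : List V} (hw : k - 1 ≤ w₁.length)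
    (hS : DmkSuf m k w₁ ⊆ DmkSuf m k w₂) {s : List V} (hs : s <:+ w₁)
    (hl : s.length ≤ m + k - 1) : s <:+ w₂ := by
  by_cases h : k - 1 ≤ s.length
  · obtain ⟨i, hi, _, hsw⟩ := hS ⟨s.length - (k - 1), by omega, by omega, hs⟩
    exact hsw
  · have hdlen : (w₁.drop (w₁.length - (k - 1))).length = k - 1 := by
      rw [List.length_drop]; omega
    have hu : w₁.drop (w₁.length - (k - 1)) <:+ w₂ := by
      obtain ⟨i, hi, _, h'⟩ := hS ⟨0, Nat.zero_le _, by rw [hdlen]; omega,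
        List.drop_suffix _ _⟩
      exact h'
    exact (List.suffix_of_suffix_length_le hs (List.drop_suffix _ _) (by omega)).trans hu

lemma Cmk_append_subset {V : Type} (bar : V → V) {m k : ℕ} (hk : 1 ≤ k) {w₁ w₂ : List V}
    (hw : k - 1 ≤ w₁.length)
    (hC : Cmk bar m k w₁ ⊆ Cmk bar m k w₂) (hS : DmkSuf m k w₁ ⊆ DmkSuf m k w₂)
    (r : List V) : Cmk bar m k (w₁ ++ r) ⊆ Cmk bar m k (w₂ ++ r) := by
  rintro p ⟨x, y, u₁, u₂, z, hx, hy, heq, hzk, hzu, hzy, hp⟩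
  by_cases hcase : r.length ≤ u₂.length
  · -- the window `x ++ y` lies inside `w₁`
    have hu₂ : u₂ <:+ w₁ ++ r := ⟨u₁ ++ (x ++ y), heq.symm⟩
    obtain ⟨v, hv⟩ := List.suffix_of_suffix_length_le (List.suffix_append w₁ r) hu₂ hcase
    -- hv : v ++ r = u₂
    have hw₁ : w₁ = u₁ ++ (x ++ y) ++ v := by
      have h6 : w₁ ++ r = (u₁ ++ (x ++ y) ++ v) ++ r := by
        rw [heq, ← hv]; simp [List.append_assoc]
      exact (List.append_inj' h6 rfl).1
    obtain ⟨t, htk, htv, hty, hzt⟩ :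
        ∃ t : List V, t.length ≤ k ∧ t <:+ v ∧ t <+: rc bar y ∧ z <:+ t ++ r := by
      by_cases hzr : z.length ≤ r.length
      · refine ⟨[], by simp, List.nil_suffix, List.nil_prefix, ?_⟩
        simpa using List.suffix_of_suffix_length_le hzu ⟨v, hv⟩ hzr
      · obtain ⟨t, ht⟩ := List.suffix_of_suffix_length_le ⟨v, hv⟩ hzu (by omega)
        -- ht : t ++ r = z
        have hlt := congrArg List.length ht
        simp only [List.length_append] at hlt
        refine ⟨t, by omega, ?_, ?_, ?_⟩
        · have hzvr : z <:+ v ++ r := by rw [hv]; exact hzu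
          have : t ++ r <:+ v ++ r := by rw [ht]; exact hzvr
          exact suffix_append_cancel.mp this
        · have h7 : t ++ r <+: rc bar y := by rw [ht]; exact hzy
          exact (List.prefix_append t r).trans h7
        · rw [ht]
    have hmem : ((x ++ y : List V), t) ∈ Cmk bar m k w₁ :=
      ⟨x, y, u₁, v, t, hx, hy, hw₁, htk, htv, hty, rfl⟩
    obtain ⟨x', y', a, b, z', hx', hy', hw₂, hz'k, hz'b, hz'y, hp'⟩ := hC hmem
    simp only [Prod.mk.injEq] at hp'
    obtain ⟨hxyeq, hz't⟩ := hp'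
    obtain ⟨hx'x, hy'y⟩ := List.append_inj' hxyeq (by rw [hy', hy])
    subst hx'x; subst hy'y; subst hz't
    refine ⟨x, y, a, b ++ r, z, hx, hy, ?_, hzk, ?_, hzy, hp⟩
    · rw [hw₂]; simp [List.append_assoc]
    · exact hzt.trans (suffix_append_cancel.mpr hz'b)
  · -- the window sticks out into `r`
    have hu₂ : u₂ <:+ w₁ ++ r := ⟨u₁ ++ (x ++ y), heq.symm⟩
    obtain ⟨c, hc⟩ := List.suffix_of_suffix_length_le hu₂ (List.suffix_append w₁ r)
      (by omega)
    -- hc : c ++ u₂ = r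
    have hclen : 1 ≤ c.length := by
      have := congrArg List.length hc
      simp only [List.length_append] at this
      omega
    have hkey : w₁ ++ c = u₁ ++ (x ++ y) := by
      have h5 : (w₁ ++ c) ++ u₂ = (u₁ ++ (x ++ y)) ++ u₂ := by
        rw [← heq, ← hc]; simp [List.append_assoc]
      exact (List.append_inj' h5 rfl).1
    by_cases hcl : c.length ≤ (x ++ y).length
    · have hcx : c <:+ x ++ y := by
        have h8 : c <:+ u₁ ++ (x ++ y) := by rw [← hkey]; exact List.suffix_append w₁ c
        exact List.suffix_of_suffix_length_le h8 (List.suffix_append u₁ (x ++ y)) hcl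
      obtain ⟨s, hs⟩ := hcx
      -- hs : s ++ c = x ++ y
      have hw₁s : w₁ = u₁ ++ s := by
        have h9 : w₁ ++ c = (u₁ ++ s) ++ c := by
          rw [hkey, ← hs]; simp [List.append_assoc]
        exact (List.append_inj' h9 rfl).1
      have hslen : s.length ≤ m + k - 1 := by
        have h10 := congrArg List.length hs
        simp only [List.length_append] at h10
        omega
      obtain ⟨a, ha⟩ := sufTrans hk hw hS ⟨u₁, hw₁s.symm⟩ hslen
      -- ha : a ++ s = w₂
      refine ⟨x, y, a, u₂, z, hx, hy, ?_, hzk, hzu, hzy, hp⟩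
      rw [← ha, ← hc, ← hs]; simp [List.append_assoc]
    · have hxyc : x ++ y <:+ c := by
        have h8 : x ++ y <:+ w₁ ++ c := by
          rw [hkey]; exact List.suffix_append u₁ (x ++ y)
        exact List.suffix_of_suffix_length_le h8 (List.suffix_append w₁ c) (by omega)
      obtain ⟨d, hd⟩ := hxyc
      -- hd : d ++ (x ++ y) = c
      refine ⟨x, y, w₂ ++ d, u₂, z, hx, hy, ?_, hzk, hzu, hzy, hp⟩
      rw [← hc, ← hd]; simp [List.append_assoc]

lemma DmkSuf_append_subset {V : Type} {m k : ℕ} (hk : 1 ≤ k) {w₁ w₂ : List V}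
    (hw : k - 1 ≤ w₁.length) (hS : DmkSuf m k w₁ ⊆ DmkSuf m k w₂) (r : List V) :
    DmkSuf m k (w₁ ++ r) ⊆ DmkSuf m k (w₂ ++ r) := by
  rintro s ⟨i, hi, hlen, hs⟩
  by_cases hc : s.length ≤ r.length
  · exact ⟨i, hi, hlen,
      (List.suffix_of_suffix_length_le hs (List.suffix_append _ _) hc).trans
        (List.suffix_append w₂ r)⟩
  · obtain ⟨t, ht⟩ := List.suffix_of_suffix_length_le (List.suffix_append w₁ r) hs
      (by omega)
    -- ht : t ++ r = s
    have htlen : t.length + r.length = s.length := by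
      have := congrArg List.length ht
      simpa using this
    have htw : t <:+ w₁ := by
      obtain ⟨q, hq⟩ := hs
      rw [← ht] at hq
      have h1 : (q ++ t) ++ r = w₁ ++ r := by rw [← hq]; simp [List.append_assoc]
      exact ⟨q, (List.append_inj' h1 rfl).1⟩
    obtain ⟨a, ha⟩ := sufTrans hk hw hS htw (by omega)
    exact ⟨i, hi, hlen, ⟨a, by rw [← ht, ← ha]; simp [List.append_assoc]⟩⟩

theorem Dmk_right_invariant (bar : V → V) (hbar : ∀ a, bar (bar a) = a) (m k : ℕ) (hm : 1 ≤ m) (hk : 1 ≤ k)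
    (w₁ w₂ : List V) (h₁ : 2 * k ≤ w₁.length) (h₂ : 2 * k ≤ w₂.length)
    (h : Dmk bar m k w₁ = Dmk bar m k w₂) :
    ∀ r : List V, Dmk bar m k (w₁ ++ r) = Dmk bar m k (w₂ ++ r) := by
  intro r
  have hw1 : k - 1 ≤ w₁.length := by omega
  have hw2 : k - 1 ≤ w₂.length := by omega
  simp only [Dmk, Prod.mk.injEq] at h ⊢
  obtain ⟨hC, hS⟩ := h
  constructor
  · exact Set.Subset.antisymm
      (Cmk_append_subset bar hk hw1 hC.le hS.le r)
      (Cmk_append_subset bar hk hw2 hC.ge hS.ge r)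
  · exact Set.Subset.antisymm
      (DmkSuf_append_subset hk hw1 hS.le r)
      (DmkSuf_append_subset hk hw2 hS.ge r)

end Hairpin
end

section
/- For words w₁, w₂ of length ≥ 2k with D_{m,k}(w₁) = D_{m,k}(w₂), and for every n ≥ 0, there exists a finite language F ⊆ V* such that rHI^n_{m,k}(w₁) = w₁F and rHI^n_{m,k}(w₂) = w₂F, where rHI^n denotes the n-fold iteration of the m-bounded right k-hairpin incompletion. -/
open scoped Classical

namespace Hairpin

variable {V : Type}

section Aux

variable {V : Type}

lemma suffix_of_suffix_length_le' {l₁ l₂ l₃ : List V} (h₁ : l₁ <:+ l₃) (h₂ : l₂ <:+ l₃)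
    (h : l₁.length ≤ l₂.length) : l₁ <:+ l₂ := by
  rw [← List.reverse_prefix] at h₁ h₂ ⊢
  exact List.prefix_of_prefix_length_le h₁ h₂ (by simpa using h)

@[simp] lemma rc_length (bar : V → V) (w : List V) : (rc bar w).length = w.length := by
  simp [rc]

/-- The set of `γ` occurring in some right hairpin decomposition of `w`. -/
def HGamma (bar : V → V) (m k : ℕ) (w : List V) : Set (List V) :=
  { γ | ∃ δ α β : List V, w = δ ++ γ ++ α ++ β ++ rc bar α ∧ α.length = k ∧ γ.length ≤ m }

lemma hasRightDecomp_iff_HGamma (bar : V → V) (m k : ℕ) (w : List V) :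
    hasRightDecomp bar m k w ↔ (HGamma bar m k w).Nonempty := by
  constructor
  · rintro ⟨δ, γ, α, β, h1, h2, h3⟩; exact ⟨γ, δ, α, β, h1, h2, h3⟩
  · rintro ⟨γ, δ, α, β, h1, h2, h3⟩; exact ⟨δ, γ, α, β, h1, h2, h3⟩

/-- The set of suffix extensions produced by one step of right hairpin incompletion. -/
noncomputable def HExt (bar : V → V) (m k : ℕ) (w : List V) : Set (List V) :=
  if (HGamma bar m k w).Nonempty then rc bar '' HGamma bar m k w else {[]}

lemma rHI_eq_image_HExt (bar : V → V) (m k : ℕ) (w : List V) :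
    rHI bar m k w = (fun f => w ++ f) '' HExt bar m k w := by
  unfold rHI HExt
  by_cases hd : hasRightDecomp bar m k w
  · rw [if_pos hd, if_pos ((hasRightDecomp_iff_HGamma bar m k w).mp hd)]
    ext v
    simp only [Set.mem_setOf_eq, Set.mem_image]
    constructor
    · rintro ⟨δ, γ, α, β, h1, h2, h3, h4⟩
      exact ⟨rc bar γ, ⟨γ, ⟨δ, α, β, h1, h2, h3⟩, rfl⟩, h4.symm⟩
    · rintro ⟨g, ⟨γ, ⟨δ, α, β, h1, h2, h3⟩, rfl⟩, hv⟩
      exact ⟨δ, γ, α, β, h1, h2, h3, hv.symm⟩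
  · rw [if_neg hd, if_neg (fun hc => hd ((hasRightDecomp_iff_HGamma bar m k w).mpr hc))]
    ext v; simp [eq_comm]

lemma HExt_finite [Fintype V] (bar : V → V) (m k : ℕ) (w : List V) :
    (HExt bar m k w).Finite := by
  unfold HExt
  split
  · refine ((List.finite_length_le V m).subset ?_).image _
    rintro γ ⟨δ, α, β, _, _, h3⟩
    exact h3
  · exact Set.finite_singleton _

lemma suffix_transfer {m k : ℕ} (hk : 1 ≤ k) {w₁ w₂ : List V}
    (hS : DmkSuf m k w₁ = DmkSuf m k w₂) (hlen : k - 1 ≤ w₁.length)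
    {s : List V} (hs : s <:+ w₁) (hsl : s.length ≤ m + k - 1) : s <:+ w₂ := by
  by_cases hc : k - 1 ≤ s.length
  · have hmem : s ∈ DmkSuf m k w₁ := ⟨s.length - (k - 1), by omega, by omega, hs⟩
    rw [hS] at hmem
    obtain ⟨i, _, _, hsuf⟩ := hmem
    exact hsuf
  · have hs'suf : (w₁.drop (w₁.length - (k - 1))) <:+ w₁ := List.drop_suffix _ _
    have hs'len : (w₁.drop (w₁.length - (k - 1))).length = k - 1 := by
      simp only [List.length_drop]; omega
    have h1 : s <:+ w₁.drop (w₁.length - (k - 1)) :=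
      suffix_of_suffix_length_le' hs hs'suf (by omega)
    have hmem : (w₁.drop (w₁.length - (k - 1))) ∈ DmkSuf m k w₁ :=
      ⟨0, by omega, by omega, hs'suf⟩
    rw [hS] at hmem
    obtain ⟨i, _, _, hsuf⟩ := hmem
    exact h1.trans hsuf

lemma HGamma_subset (bar : V → V) {m k : ℕ} (hk : 1 ≤ k) {w₁ w₂ : List V}
    (hC : Cmk bar m k w₁ = Cmk bar m k w₂) (hS : DmkSuf m k w₁ = DmkSuf m k w₂)
    (hlen : k - 1 ≤ w₁.length) (u : List V) :
    HGamma bar m k (w₁ ++ u) ⊆ HGamma bar m k (w₂ ++ u) := by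
  rintro γ ⟨δ, α, β, heq, hα, hγ⟩
  by_cases hd1 : δ.length + γ.length + k ≤ w₁.length
  · -- γ and α lie entirely inside w₁
    have h5 : w₁ ++ u = (δ ++ γ ++ α) ++ (β ++ rc bar α) := by
      rw [heq]; simp [List.append_assoc]
    have hpre : (δ ++ γ ++ α) <+: w₁ := by
      refine List.prefix_of_prefix_length_le ⟨β ++ rc bar α, h5.symm⟩
        (List.prefix_append _ _) ?_
      simp only [List.length_append, hα]; omega
    obtain ⟨t, ht⟩ := hpre
    have h6 : (δ ++ γ ++ α) ++ (t ++ u) = (δ ++ γ ++ α) ++ (β ++ rc bar α) := by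
      rw [← List.append_assoc, ht, h5]
    have htu : t ++ u = β ++ rc bar α := List.append_cancel_left h6
    by_cases hul : u.length < k
    · -- u is shorter than k, part of `rc α` sits at the end of w₁
      have husuf : u <:+ rc bar α := by
        refine suffix_of_suffix_length_le' (List.suffix_append t u) ?_ ?_
        · rw [htu]; exact List.suffix_append _ _
        · simp only [rc_length, hα]; omega
      obtain ⟨z, hz⟩ := husuf
      have h7 : t ++ u = (β ++ z) ++ u := by rw [htu, ← hz, List.append_assoc]
      have hzt : t = β ++ z := List.append_cancel_right h7
      have hzlen : z.length ≤ k := by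
        have := congrArg List.length hz
        simp only [List.length_append, rc_length, hα] at this
        omega
      have hmem : ((γ ++ α, z) : List V × List V) ∈ Cmk bar m k w₁ :=
        ⟨γ, α, δ, t, z, hγ, hα, by rw [← ht]; simp [List.append_assoc], hzlen,
          ⟨β, hzt.symm⟩, ⟨u, hz⟩, rfl⟩
      rw [hC] at hmem
      obtain ⟨x', y', a, b, z', _, hy'k, hw₂eq, _, hz'suf, _, hp⟩ := hmem
      have h8 : γ ++ α = x' ++ y' := congrArg Prod.fst hp
      have h9 : z = z' := congrArg Prod.snd hp
      obtain ⟨hx'', hy''⟩ := List.append_inj' h8 (by rw [hy'k, hα])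
      subst hx''; subst hy''
      rw [← h9] at hz'suf
      obtain ⟨b₀, hb₀⟩ := hz'suf
      refine ⟨a, α, b₀, ?_, hα, hγ⟩
      rw [hw₂eq, ← hb₀, ← hz]
      simp [List.append_assoc]
    · -- u is at least as long as k, so `rc α` sits entirely inside u
      have hrcu : rc bar α <:+ u := by
        refine suffix_of_suffix_length_le' ?_ (List.suffix_append t u) ?_
        · rw [htu]; exact List.suffix_append _ _
        · simp only [rc_length, hα]; omega
      obtain ⟨u₀, hu₀⟩ := hrcu
      have hmem : ((γ ++ α, ([] : List V)) : List V × List V) ∈ Cmk bar m k w₁ :=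
        ⟨γ, α, δ, t, [], hγ, hα, by rw [← ht]; simp [List.append_assoc], by simp,
          List.nil_suffix, List.nil_prefix, rfl⟩
      rw [hC] at hmem
      obtain ⟨x', y', a, b, z', _, hy'k, hw₂eq, _, _, _, hp⟩ := hmem
      have h8 : γ ++ α = x' ++ y' := congrArg Prod.fst hp
      obtain ⟨hx'', hy''⟩ := List.append_inj' h8 (by rw [hy'k, hα])
      subst hx''; subst hy''
      refine ⟨a, α, b ++ u₀, ?_, hα, hγ⟩
      rw [hw₂eq, ← hu₀]
      simp [List.append_assoc]
  · by_cases hd2 : δ.length ≤ w₁.length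
    · -- the decomposition cuts into the suffix of w₁ of length < γ.length + k
      have hδpre : δ <+: w₁ :=
        List.prefix_of_prefix_length_le (by rw [heq]; simp [List.append_assoc])
          (List.prefix_append _ _) hd2
      obtain ⟨s, hδs⟩ := hδpre
      have h6 : δ ++ (s ++ u) = δ ++ (γ ++ (α ++ (β ++ rc bar α))) := by
        rw [← List.append_assoc, hδs, heq]; simp [List.append_assoc]
      have hsu : s ++ u = γ ++ (α ++ (β ++ rc bar α)) := List.append_cancel_left h6
      have hslen : s.length ≤ m + k - 1 := by
        have hl := congrArg List.length hδs
        simp only [List.length_append] at hl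
        omega
      have hsw₂ : s <:+ w₂ := suffix_transfer hk hS hlen ⟨δ, hδs⟩ hslen
      obtain ⟨a, has⟩ := hsw₂
      refine ⟨a, α, β, ?_, hα, hγ⟩
      rw [← has, List.append_assoc, hsu]
      simp [List.append_assoc]
    · -- δ covers all of w₁
      have hw₁pre : w₁ <+: δ :=
        List.prefix_of_prefix_length_le (List.prefix_append _ _)
          (by rw [heq]; simp [List.append_assoc]) (by omega)
      obtain ⟨δ₂, hδ₂⟩ := hw₁pre
      have h6 : w₁ ++ u = w₁ ++ (δ₂ ++ (γ ++ (α ++ (β ++ rc bar α)))) := by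
        rw [heq, ← hδ₂]; simp [List.append_assoc]
      have hu : u = δ₂ ++ (γ ++ (α ++ (β ++ rc bar α))) := List.append_cancel_left h6
      refine ⟨w₂ ++ δ₂, α, β, ?_, hα, hγ⟩
      rw [hu]; simp [List.append_assoc]

end Aux

variable {V : Type} [Fintype V]

theorem rHIn_eq_concat_finite (bar : V → V) (hbar : ∀ a, bar (bar a) = a) (m k : ℕ) (hm : 1 ≤ m) (hk : 1 ≤ k)
    (w₁ w₂ : List V) (h₁ : 2 * k ≤ w₁.length) (h₂ : 2 * k ≤ w₂.length)
    (h : Dmk bar m k w₁ = Dmk bar m k w₂) :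
    ∀ n : ℕ, ∃ F : Set (List V), F.Finite ∧
      rHIn bar m k w₁ n = (fun f => w₁ ++ f) '' F ∧
      rHIn bar m k w₂ n = (fun f => w₂ ++ f) '' F := by
  have hC : Cmk bar m k w₁ = Cmk bar m k w₂ := congrArg Prod.fst h
  have hS : DmkSuf m k w₁ = DmkSuf m k w₂ := congrArg Prod.snd h
  have hGam : ∀ f : List V, HGamma bar m k (w₁ ++ f) = HGamma bar m k (w₂ ++ f) := fun f =>
    Set.Subset.antisymm (HGamma_subset bar hk hC hS (by omega) f)
      (HGamma_subset bar hk hC.symm hS.symm (by omega) f)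
  have hExt : ∀ f : List V, HExt bar m k (w₂ ++ f) = HExt bar m k (w₁ ++ f) := fun f => by
    unfold HExt; rw [hGam f]
  intro n
  induction n with
  | zero =>
      exact ⟨{[]}, Set.finite_singleton _, by simp [rHIn], by simp [rHIn]⟩
  | succ n ih =>
      obtain ⟨F, hFfin, hF1, hF2⟩ := ih
      refine ⟨⋃ f ∈ F, (fun g => f ++ g) '' HExt bar m k (w₁ ++ f),
        hFfin.biUnion (fun f _ => (HExt_finite bar m k (w₁ ++ f)).image _), ?_, ?_⟩
      · show (⋃ v ∈ rHIn bar m k w₁ n, rHI bar m k v) = _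
        rw [hF1, Set.biUnion_image, Set.image_iUnion₂]
        refine Set.iUnion₂_congr fun f _ => ?_
        rw [rHI_eq_image_HExt, Set.image_image]
        exact Set.image_congr fun g _ => List.append_assoc w₁ f g
      · show (⋃ v ∈ rHIn bar m k w₂ n, rHI bar m k v) = _
        rw [hF2, Set.biUnion_image, Set.image_iUnion₂]
        refine Set.iUnion₂_congr fun f _ => ?_
        rw [rHI_eq_image_HExt, hExt f, Set.image_image]
        exact Set.image_congr fun g _ => List.append_assoc w₂ f g

end Hairpin
end

section
/- For any word w ∈ V* and any m, k ≥ 1, the language rHI*_{m,k}(w) obtained by applying the iterated m-bounded right k-hairpin incompletion to the singleton {w} is a regular language. -/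
/-!
Whether `rHI` may append `γ̄^R` to `u` (for `|γ| ≤ m`) depends only on a bounded summary of
`u`: whether `k ≤ |u|`, the last `k` letters of `u` (which determine `α`), and the set of words of
length `≤ m + k` occurring in `u` before its last `k` letters. Appending a letter updates this
summary from itself and the last `m + 2k` letters, so a DFA with finitely many reachable states
computes it. An automaton that also remembers the unread rest of the block being appended, a
word of length `≤ max m |w|`, accepts exactly `rHI*(w)`, and its subset automaton again has
finitely many reachable states.
-/

open scoped Classical

open List Relation

namespace List

variable {α : Type*}

theorem rtake_rtake_of_le {n N : ℕ} (h : n ≤ N) (l : List α) :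
    (l.rtake N).rtake n = l.rtake n := by
  simp [rtake_eq_reverse_take_reverse, take_take, min_eq_left h]

theorem rtake_concat_rtake (l : List α) (a : α) (N : ℕ) :
    (l ++ [a]).rtake N = (l.rtake N ++ [a]).rtake N := by
  cases N with
  | zero => simp
  | succ n => rw [rtake_concat_succ, rtake_concat_succ, rtake_rtake_of_le n.le_succ]

theorem IsSuffix.rtake_eq {s l : List α} (h : s <:+ l) {k : ℕ} (hk : k ≤ s.length) :
    s.rtake k = l.rtake k := by
  obtain ⟨c, rfl⟩ := h
  simp [rtake, Nat.add_sub_assoc hk, drop_append]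

def factorsBefore (n k : ℕ) (u : List α) : Set (List α) :=
  {f | f.length ≤ n ∧ ∃ s, k ≤ s.length ∧ f ++ s <:+ u}

theorem factorsBefore_mono {n k : ℕ} {u v : List α} (h : u <:+ v) :
    factorsBefore n k u ⊆ factorsBefore n k v :=
  fun _ ⟨hf, s, hs, hsuf⟩ => ⟨hf, s, hs, hsuf.trans h⟩

theorem factorsBefore_concat (n k : ℕ) (u : List α) (a : α) :
    factorsBefore n k (u ++ [a]) =
      factorsBefore n k u ∪ factorsBefore n k (u.rtake (n + k) ++ [a]) := by
  have hwin : u.rtake (n + k) ++ [a] <:+ u ++ [a] := by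
    obtain ⟨c, hc⟩ := drop_suffix (u.length - (n + k)) u
    exact ⟨c, by rw [rtake, ← append_assoc, hc]⟩
  ext f
  refine ⟨fun ⟨hf, s, hs, hsuf⟩ => ?_, ?_⟩
  · rcases Nat.lt_or_ge k s.length with hlt | hle
    · left
      obtain ⟨s', b, rfl⟩ := (eq_nil_or_concat s).resolve_left (ne_nil_of_length_pos (by omega))
      rw [concat_eq_append, ← append_assoc, suffix_concat_iff] at hsuf
      obtain ⟨t, ht, htu⟩ := hsuf.resolve_left (by simp)
      refine ⟨hf, s', by simp at hlt; omega, ?_⟩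
      rwa [(append_inj' ht rfl).1]
    · right
      refine ⟨hf, s, hs, suffix_of_suffix_length_le hsuf hwin ?_⟩
      have := hsuf.length_le
      simp only [length_append, length_singleton, rtake, length_drop] at this ⊢
      omega
  · rintro (⟨hf, s, hs, hsuf⟩ | hmem)
    · refine ⟨hf, s ++ [a], by simp; omega, ?_⟩
      obtain ⟨c, hc⟩ := hsuf
      exact ⟨c, by simp [← hc]⟩
    · exact factorsBefore_mono hwin hmem

end List

namespace DFA

variable {α σ : Type*}

theorem isRegular_accepts_of_finite_range_eval (M : DFA α σ) (h : (Set.range M.eval).Finite) :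
    M.accepts.IsRegular := by
  apply Language.IsRegular.of_finite_range_leftQuotient
  rw [Language.leftQuotient_accepts, Set.range_comp]
  exact h.image _

section

variable (α) (n k : ℕ)

def factorsBefore : DFA α (Set (List α) × List α) where
  step S a := (S.1 ∪ List.factorsBefore n k (S.2 ++ [a]), (S.2 ++ [a]).rtake (n + k))
  start := (List.factorsBefore n k [], [])
  accept := ∅

variable {α}

theorem factorsBefore_eval (u : List α) :
    (factorsBefore α n k).eval u = (List.factorsBefore n k u, u.rtake (n + k)) := by
  induction u using reverseRecOn with
  | nil => simp [factorsBefore]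
  | append_singleton u a ih =>
    rw [eval_append_singleton, ih, factorsBefore_concat, rtake_concat_rtake]
    rfl

theorem finite_range_factorsBefore_eval [Finite α] :
    (Set.range (factorsBefore α n k).eval).Finite := by
  refine ((finite_length_le α n).finite_subsets.prod (finite_length_le α (n + k))).subset ?_
  rintro _ ⟨u, rfl⟩
  rw [factorsBefore_eval]
  exact ⟨fun _ hf => hf.1, by simp [rtake]; omega⟩

end

def AppendStep (M : DFA α σ) (T : σ → Set (List α)) (u v : List α) : Prop :=
  ∃ t ∈ T (M.eval u), v = u ++ t

variable (M : DFA α σ) (T : σ → Set (List α)) (w : List α)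

/-- The second component of a state is the part of the current block not read yet. -/
def appendClosureNFA : NFA α (σ × List α) where
  step q a :=
    {q' | q'.1 = M.step q.1 a ∧ (a :: q'.2 = q.2 ∨ (q.2 = [] ∧ a :: q'.2 ∈ T q.1))}
  start := {(M.start, w)}
  accept := {q | q.2 = []}

theorem of_mem_appendClosureNFA_eval {x : List α} {q : σ × List α}
    (hq : q ∈ (M.appendClosureNFA T w).eval x) :
    q.1 = M.eval x ∧ ReflTransGen (M.AppendStep T) w (x ++ q.2) := by
  induction x using reverseRecOn generalizing q with
  | nil =>
    obtain rfl : q = (M.start, w) := hq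
    exact ⟨rfl, .refl⟩
  | append_singleton x a ih =>
    rw [NFA.eval_append_singleton, NFA.mem_stepSet] at hq
    obtain ⟨p, hp, hstep, hcont⟩ := hq
    obtain ⟨hp₁, hreach⟩ := ih hp
    refine ⟨by rw [hstep, hp₁, eval_append_singleton], ?_⟩
    rcases hcont with hcons | ⟨hnil, hT⟩
    · simpa [← hcons] using hreach
    · rw [hnil, append_nil] at hreach
      exact hreach.tail ⟨a :: q.2, hp₁ ▸ hT, by simp⟩

theorem length_le_of_mem_appendClosureNFA_eval {N : ℕ} (hT : ∀ s, ∀ t ∈ T s, t.length ≤ N)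
    {x : List α} {q : σ × List α} (hq : q ∈ (M.appendClosureNFA T w).eval x) :
    q.2.length ≤ max N w.length := by
  induction x using reverseRecOn generalizing q with
  | nil =>
    obtain rfl : q = (M.start, w) := hq
    exact le_max_right _ _
  | append_singleton x a ih =>
    rw [NFA.eval_append_singleton, NFA.mem_stepSet] at hq
    obtain ⟨p, hp, -, hcont⟩ := hq
    rcases hcont with hcons | ⟨-, hT'⟩
    · have := ih hp
      rw [← hcons, length_cons] at this
      omega
    · have := hT _ _ hT'
      rw [length_cons] at this
      omega

theorem exists_mem_appendClosureNFA_eval_append {x : List α} {s : σ} (p : List α)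
    (h : (s, p) ∈ (M.appendClosureNFA T w).eval x) :
    ∃ s', (s', []) ∈ (M.appendClosureNFA T w).eval (x ++ p) := by
  induction p generalizing x s with
  | nil => exact ⟨s, by simpa using h⟩
  | cons a p ih =>
    have h' : (M.step s a, p) ∈ (M.appendClosureNFA T w).eval (x ++ [a]) := by
      rw [NFA.eval_append_singleton, NFA.mem_stepSet]
      exact ⟨_, h, rfl, Or.inl rfl⟩
    simpa using ih h'

theorem appendClosureNFA_accepts :
    (M.appendClosureNFA T w).accepts = {v | ReflTransGen (M.AppendStep T) w v} := by
  ext v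
  constructor
  · rintro ⟨q, hq, hv⟩
    have hreach := (M.of_mem_appendClosureNFA_eval T w hv).2
    rwa [show q.2 = [] from hq, append_nil] at hreach
  · intro hv
    suffices ∃ s, (s, []) ∈ (M.appendClosureNFA T w).eval v from
      let ⟨s, hs⟩ := this; ⟨_, rfl, hs⟩
    induction hv with
    | refl => exact M.exists_mem_appendClosureNFA_eval_append T w (x := []) w rfl
    | @tail u v _ hstep ih =>
      obtain ⟨s, hs⟩ := ih
      obtain ⟨t, hT, rfl⟩ := hstep
      obtain rfl : s = M.eval u := (M.of_mem_appendClosureNFA_eval T w hs).1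
      cases t with
      | nil => exact ⟨_, by simpa using hs⟩
      | cons a p =>
        have h' : (M.step (M.eval u) a, p) ∈ (M.appendClosureNFA T w).eval (u ++ [a]) := by
          rw [NFA.eval_append_singleton, NFA.mem_stepSet]
          exact ⟨_, hs, rfl, Or.inr ⟨rfl, hT⟩⟩
        simpa using M.exists_mem_appendClosureNFA_eval_append T w p h'

theorem isRegular_setOf_reflTransGen_appendStep [Finite α] (hM : (Set.range M.eval).Finite)
    {N : ℕ} (hT : ∀ s, ∀ t ∈ T s, t.length ≤ N) :
    Language.IsRegular {v | ReflTransGen (M.AppendStep T) w v} := by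
  rw [← appendClosureNFA_accepts, ← NFA.toDFA_correct]
  refine isRegular_accepts_of_finite_range_eval _ ?_
  refine (hM.prod (finite_length_le α (max N w.length))).finite_subsets.subset ?_
  rintro _ ⟨x, rfl⟩ q hq
  exact ⟨⟨x, (M.of_mem_appendClosureNFA_eval T w hq).1.symm⟩,
    M.length_le_of_mem_appendClosureNFA_eval T w hT hq⟩

end DFA

namespace Hairpin

section

variable {V : Type} (bar : V → V) (m k : ℕ)

theorem length_rc (l : List V) : (rc bar l).length = l.length := by
  simp [rc]

theorem rc_rc (hbar : ∀ a, bar (bar a) = a) (l : List V) : rc bar (rc bar l) = l := by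
  simp [rc, Function.comp_def, hbar]

def RightStep (u v : List V) : Prop :=
  ∃ δ γ α β : List V, u = δ ++ γ ++ α ++ β ++ rc bar α ∧ α.length = k ∧
    γ.length ≤ m ∧ v = u ++ rc bar γ

theorem rHI_eq_insert (u : List V) : rHI bar m k u = insert u {v | RightStep bar m k u v} := by
  rw [rHI]
  split_ifs with h
  · refine (Set.insert_eq_of_mem ?_).symm
    obtain ⟨δ, γ, α, β, hu, hα, -⟩ := h
    exact ⟨δ ++ γ, [], α, β, by simp [hu], hα, by simp, by simp [rc]⟩
  · have : {v | RightStep bar m k u v} = ∅ :=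
      Set.eq_empty_of_forall_notMem fun _ ⟨δ, γ, α, β, hu, hα, hγ, _⟩ =>
        h ⟨δ, γ, α, β, hu, hα, hγ⟩
    rw [this, insert_empty_eq]

theorem rHIstar_eq_setOf_reflTransGen (w : List V) :
    rHIstar bar m k w = {v | ReflTransGen (RightStep bar m k) w v} := by
  ext v
  simp only [rHIstar, Set.mem_iUnion, Set.mem_ofPred_eq]
  constructor
  · rintro ⟨n, hn⟩
    induction n generalizing v with
    | zero => exact (Set.mem_singleton_iff.1 hn) ▸ .refl
    | succ n ih =>
      simp only [rHIn, Set.mem_iUnion] at hn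
      obtain ⟨u, hu, hv⟩ := hn
      rw [rHI_eq_insert] at hv
      rcases hv with hvu | hstep
      exacts [hvu ▸ ih u hu, (ih u hu).tail hstep]
  · intro h
    induction h with
    | refl => exact ⟨0, rfl⟩
    | tail _ hstep ih =>
      obtain ⟨n, hn⟩ := ih
      exact ⟨n + 1, Set.mem_biUnion hn (by rw [rHI_eq_insert]; exact Or.inr hstep)⟩

/-- `ᾱ^R` has to be the suffix of length `k` of `u`, so `α` is determined by `u`. -/
theorem exists_hairpin_iff (hbar : ∀ a, bar (bar a) = a) {u γ : List V} (hγ : γ.length ≤ m) :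
    (∃ δ α β : List V, u = δ ++ γ ++ α ++ β ++ rc bar α ∧ α.length = k) ↔
      k ≤ u.length ∧ γ ++ rc bar (u.rtake k) ∈ factorsBefore (m + k) k u := by
  constructor
  · rintro ⟨δ, α, β, rfl, rfl⟩
    have htail : (δ ++ γ ++ α ++ β ++ rc bar α).rtake α.length = rc bar α := by
      rw [← (suffix_append _ _).rtake_eq (length_rc bar α).ge]
      simp [rtake, length_rc]
    rw [htail, rc_rc bar hbar]
    refine ⟨by simp only [length_append, length_rc]; omega, by simp; omega,
      β ++ rc bar α, by simp [length_rc], δ, by simp⟩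
  · rintro ⟨hk, -, s, hs, δ, hδ⟩
    have hsu : s <:+ u := hδ ▸ (suffix_append _ s).trans (suffix_append δ _)
    have hs' : s = s.rdrop k ++ u.rtake k := by
      rw [← hsu.rtake_eq hs]
      exact (take_append_drop _ _).symm
    refine ⟨δ, rc bar (u.rtake k), s.rdrop k, ?_, by simp [length_rc, rtake]; omega⟩
    rw [rc_rc bar hbar]
    calc u = δ ++ (γ ++ rc bar (u.rtake k) ++ (s.rdrop k ++ u.rtake k)) := by rw [← hs', hδ]
      _ = _ := by simp

def hairpinExtensions (S : Set (List V) × List V) : Set (List V) :=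
  {t | ∃ γ, γ.length ≤ m ∧ k ≤ S.2.length ∧ γ ++ rc bar (S.2.rtake k) ∈ S.1 ∧
    t = rc bar γ}

theorem rightStep_eq_appendStep (hbar : ∀ a, bar (bar a) = a) :
    RightStep bar m k = (DFA.factorsBefore V (m + k) k).AppendStep (hairpinExtensions bar m k) := by
  ext u v
  have hwin : k ≤ (u.rtake (m + k + k)).length ↔ k ≤ u.length := by simp [rtake]; omega
  simp only [DFA.AppendStep, DFA.factorsBefore_eval, hairpinExtensions, hwin,
    rtake_rtake_of_le (Nat.le_add_left k (m + k))]
  constructor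
  · rintro ⟨δ, γ, α, β, hu, hα, hγ, rfl⟩
    obtain ⟨hk, hmem⟩ := (exists_hairpin_iff bar m k hbar hγ).1 ⟨δ, α, β, hu, hα⟩
    exact ⟨_, ⟨γ, hγ, hk, hmem, rfl⟩, rfl⟩
  · rintro ⟨_, ⟨γ, hγ, hk, hmem, rfl⟩, rfl⟩
    obtain ⟨δ, α, β, hu, hα⟩ := (exists_hairpin_iff bar m k hbar hγ).2 ⟨hk, hmem⟩
    exact ⟨δ, γ, α, β, hu, hα, hγ, rfl⟩

end

variable {V : Type} [Fintype V]

theorem rHIstar_isRegular_general (bar : V → V) (hbar : ∀ a, bar (bar a) = a) (m k : ℕ) (w : List V) :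
    Language.IsRegular (lang (rHIstar bar m k w)) := by
  rw [lang, rHIstar_eq_setOf_reflTransGen, rightStep_eq_appendStep bar m k hbar]
  refine DFA.isRegular_setOf_reflTransGen_appendStep _ _ w
    (DFA.finite_range_factorsBefore_eval _ _) (N := m) ?_
  rintro _ _ ⟨γ, hγ, -, -, rfl⟩
  rwa [length_rc]

theorem rHIstar_isRegular (bar : V → V) (hbar : ∀ a, bar (bar a) = a) (m k : ℕ) (hm : 1 ≤ m) (hk : 1 ≤ k) (w : List V) :
    Language.IsRegular (lang (rHIstar bar m k w)) :=
  rHIstar_isRegular_general bar hbar m k w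

end Hairpin
end

section
/- The family of regular languages is closed under iterated m-bounded right k-hairpin incompletion: if L ⊆ V* is regular, then rHI*_{m,k}(L) is regular, for all m, k ≥ 1. -/
/-!
Appending `rc γ` to `x` is allowed exactly when `γ ++ α` is an infix of `x` without its last
`k` letters, `rc α` being those last `k` letters. Since `|γ ++ α| ≤ m + k`, the allowed
extensions of `x` depend only on a finite-valued abstraction of `x` (the infixes of length
at most `m + k` of `x.rdrop k`, the last `m + k` letters of `x.rdrop k`, and `x.rtake k`),
which can be updated letter by letter. A word `u` is in `rHI*(L)` iff `u = x ++ s` with `x` in `rHI*(L)` and `s`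
an unfinished extension of length at most `m`; the set of such pairs `(abstraction of x, s)`,
together with the abstraction of `u` and the left quotient of `L` by `u`, takes finitely many
values and is a right congruence, so Myhill–Nerode applies.
-/

open scoped Classical

namespace Hairpin

variable {V : Type}

section RightCongruence

variable {α S : Type*}

theorem isRegular_of_rightCongr_finite_range {M : Language α} (f : List α → S)
    (hfin : (Set.range f).Finite)
    (hstep : ∀ u v, f u = f v → ∀ a, f (u ++ [a]) = f (v ++ [a]))
    (hmem : ∀ u v, f u = f v → u ∈ M → v ∈ M) : M.IsRegular := by
  have happend : ∀ w u v, f u = f v → f (u ++ w) = f (v ++ w) := by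
    intro w
    induction w with
    | nil => simp
    | cons a w ih =>
      intro u v h
      simpa using ih _ _ (hstep u v h a)
  have hquot : ∀ u v, f u = f v → M.leftQuotient u = M.leftQuotient v := fun u v h =>
    Set.ext fun w => ⟨hmem _ _ (happend w u v h), hmem _ _ (happend w v u h.symm)⟩
  refine .of_finite_range_leftQuotient
    ((hfin.image fun s => M.leftQuotient (Function.invFun f s)).subset ?_)
  rintro _ ⟨u, rfl⟩
  exact ⟨f u, ⟨u, rfl⟩, hquot _ _ (Function.invFun_eq ⟨u, rfl⟩)⟩

end RightCongruence

section AppendClosure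

variable {α S : Type*} (P : List α → Set (List α)) (L : Language α)

inductive AppendClosure : List α → Prop
  | base {w : List α} : w ∈ L → AppendClosure w
  | append {x p : List α} : AppendClosure x → p ∈ P x → AppendClosure (x ++ p)

def pending (σ : List α → S) (m : ℕ) (u : List α) : Set (S × List α) :=
  {q | ∃ x s, AppendClosure P L x ∧ s.length ≤ m ∧ u = x ++ s ∧ q = (σ x, s)}

variable {P L} {σ : List α → S} {m : ℕ}

theorem AppendClosure.mem_or_exists_append {y : List α} (h : AppendClosure P L y) :
    y ∈ L ∨ ∃ x p, AppendClosure P L x ∧ p ∈ P x ∧ p ≠ [] ∧ y = x ++ p := by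
  induction h with
  | base hw => exact Or.inl hw
  | @append x p hx hp ih =>
    rcases eq_or_ne p [] with rfl | hp0
    · simpa using ih
    · exact Or.inr ⟨x, p, hx, hp, hp0, rfl⟩

theorem mk_nil_mem_pending {u : List α} (hu : AppendClosure P L u) :
    (σ u, []) ∈ pending P L σ m u :=
  ⟨u, [], hu, Nat.zero_le _, by simp, rfl⟩

theorem appendClosure_of_mk_nil_mem_pending {u : List α} {q : S}
    (h : (q, []) ∈ pending P L σ m u) : AppendClosure P L u := by
  obtain ⟨x, s, hx, -, rfl, hq⟩ := h
  obtain ⟨-, rfl⟩ := Prod.mk.inj hq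
  simpa using hx

theorem AppendClosure.concat_of_pending_subset (hP : ∀ u v, σ u = σ v → P u = P v)
    (hPlen : ∀ x, ∀ p ∈ P x, p.length ≤ m) {u v : List α} {a : α}
    (hL : u ++ [a] ∈ L → v ++ [a] ∈ L) (hpend : pending P L σ m u ⊆ pending P L σ m v)
    (hu : AppendClosure P L (u ++ [a])) : AppendClosure P L (v ++ [a]) := by
  rcases hu.mem_or_exists_append with hu | ⟨x, p, hx, hp, hp0, hux⟩
  · exact .base (hL hu)
  obtain ⟨s, b, rfl⟩ := (List.eq_nil_or_concat p).resolve_left hp0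
  rw [List.concat_eq_append] at hp
  simp only [List.concat_eq_append, ← List.append_assoc, List.append_singleton_inj] at hux
  obtain ⟨rfl, rfl⟩ := hux
  have hs : s.length ≤ m := by
    have := hPlen x _ hp
    simp only [List.length_append, List.length_singleton] at this
    omega
  obtain ⟨x', s', hx', -, rfl, hq⟩ := hpend ⟨x, s, hx, hs, rfl, rfl⟩
  obtain ⟨hσx, rfl⟩ := Prod.mk.inj hq
  rw [List.append_assoc]
  exact hx'.append (hP _ _ hσx ▸ hp)

theorem pending_concat_subset (hσ : ∀ u v, σ u = σ v → ∀ a, σ (u ++ [a]) = σ (v ++ [a]))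
    (hP : ∀ u v, σ u = σ v → P u = P v) (hPlen : ∀ x, ∀ p ∈ P x, p.length ≤ m)
    {u v : List α} {a : α} (hL : u ++ [a] ∈ L → v ++ [a] ∈ L) (hσuv : σ u = σ v)
    (hpend : pending P L σ m u ⊆ pending P L σ m v) :
    pending P L σ m (u ++ [a]) ⊆ pending P L σ m (v ++ [a]) := by
  rintro _ ⟨y, s, hy, hs, hu, rfl⟩
  rcases List.eq_nil_or_concat s with rfl | ⟨s, b, rfl⟩
  · rw [List.append_nil] at hu
    subst hu
    rw [hσ u v hσuv a]
    exact mk_nil_mem_pending (hy.concat_of_pending_subset hP hPlen hL hpend)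
  simp only [List.concat_eq_append] at hu hs ⊢
  rw [← List.append_assoc, List.append_singleton_inj] at hu
  obtain ⟨rfl, rfl⟩ := hu
  have hs' : s.length ≤ m := by
    simp only [List.length_append, List.length_singleton] at hs
    omega
  obtain ⟨y', s', hy', -, rfl, hq⟩ := hpend ⟨y, s, hy, hs', rfl, rfl⟩
  obtain ⟨hσy, rfl⟩ := Prod.mk.inj hq
  exact ⟨y', s ++ [a], hy', hs, by simp, by rw [hσy]⟩

theorem isRegular_appendClosure [Finite α] (hL : L.IsRegular) (hfin : (Set.range σ).Finite)
    (hσ : ∀ u v, σ u = σ v → ∀ a, σ (u ++ [a]) = σ (v ++ [a]))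
    (hP : ∀ u v, σ u = σ v → P u = P v) (hPlen : ∀ x, ∀ p ∈ P x, p.length ≤ m) :
    Language.IsRegular ({w | AppendClosure P L w} : Language α) := by
  refine isRegular_of_rightCongr_finite_range
    (fun u => (L.leftQuotient u, σ u, pending P L σ m u)) ?_ ?_ ?_
  · refine (hL.finite_range_leftQuotient.prod (hfin.prod
      ((hfin.prod (List.finite_length_le α m)).finite_subsets))).subset ?_
    rintro _ ⟨u, rfl⟩
    refine ⟨⟨u, rfl⟩, ⟨u, rfl⟩, ?_⟩
    rintro _ ⟨x, s, -, hs, -, rfl⟩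
    exact ⟨⟨x, rfl⟩, hs⟩
  · intro u v h a
    simp only [Prod.mk.injEq] at h
    obtain ⟨hquot, hσuv, hpend⟩ := h
    have hmem {u v : List α} (h : L.leftQuotient u = L.leftQuotient v) :
        u ++ [a] ∈ L → v ++ [a] ∈ L := by
      simpa only [← Language.mem_leftQuotient, h] using id
    refine Prod.ext ?_ (Prod.ext (hσ u v hσuv a) (subset_antisymm ?_ ?_))
    · simp only [Language.leftQuotient_append, hquot]
    · exact pending_concat_subset hσ hP hPlen (hmem hquot) hσuv hpend.subset
    · exact pending_concat_subset hσ hP hPlen (hmem hquot.symm) hσuv.symm hpend.symm.subset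
  · intro u v h hu
    simp only [Prod.mk.injEq] at h
    obtain ⟨-, -, hpend⟩ := h
    exact appendClosure_of_mk_nil_mem_pending (hpend ▸ mk_nil_mem_pending hu)

end AppendClosure

section Window

variable {α : Type*}

theorem rdrop_append_rtake (x : List α) (k : ℕ) : x.rdrop k ++ x.rtake k = x :=
  List.take_append_drop _ _

theorem rtake_suffix (x : List α) (k : ℕ) : x.rtake k <:+ x :=
  List.drop_suffix _ _

theorem length_rtake (x : List α) (k : ℕ) : (x.rtake k).length = min k x.length := by
  simp only [List.rtake, List.length_drop]
  omega

theorem suffix_rtake_of_suffix {l x : List α} {k : ℕ} (h : l <:+ x) (hl : l.length ≤ k) :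
    l <:+ x.rtake k :=
  List.suffix_of_suffix_length_le h (rtake_suffix x k) (by
    rw [length_rtake]; exact le_min hl h.length_le)

theorem rtake_append (x z : List α) (k : ℕ) : (x ++ z).rtake k = (x.rtake k ++ z).rtake k := by
  have hsuf : (x.rtake k ++ z).rtake k <:+ x ++ z :=
    (rtake_suffix _ _).trans (List.suffix_append_self_iff.2 (rtake_suffix x k))
  refine (List.suffix_of_suffix_length_le (rtake_suffix _ _) hsuf ?_).eq_of_length ?_ <;>
    simp only [length_rtake, List.length_append] <;> omega

theorem rdrop_append (x z : List α) (k : ℕ) :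
    (x ++ z).rdrop k = x.rdrop k ++ (x.rtake k ++ z).rdrop k := by
  rcases le_or_gt k x.length with hk | hk
  · conv_lhs => rw [← rdrop_append_rtake x k, List.append_assoc]
    exact List.rdrop_append_of_le_length k (by simp [length_rtake]; omega)
  · have hrdrop : x.rdrop k = [] := by simp [List.rdrop]; omega
    have hrtake : x.rtake k = x := by simp [List.rtake, Nat.sub_eq_zero_of_le hk.le]
    rw [hrdrop, hrtake, List.nil_append]

theorem eq_append_iff_rdrop_rtake {x A t : List α} {k : ℕ} (ht : t.length = k) :
    x = A ++ t ↔ A = x.rdrop k ∧ t = x.rtake k := by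
  constructor
  · rintro rfl
    subst ht
    refine ⟨List.rdrop_append_length.symm, ?_⟩
    simp [List.rtake]
  · rintro ⟨rfl, rfl⟩
    exact (rdrop_append_rtake x k).symm

def shortInfixes (N : ℕ) (y : List α) : Set (List α) := {l | l.length ≤ N ∧ l <:+: y}

theorem shortInfixes_append (N : ℕ) (u z : List α) :
    shortInfixes N (u ++ z) = shortInfixes N u ∪ shortInfixes N (u.rtake N ++ z) := by
  ext l
  simp only [shortInfixes, Set.mem_union, Set.mem_ofPred_eq]
  constructor
  · rintro ⟨hl, h⟩
    rcases List.infix_append_iff.1 h with h | h | ⟨l₁, l₂, rfl, h₁, h₂⟩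
    · exact Or.inl ⟨hl, h⟩
    · exact Or.inr ⟨hl, List.infix_append_of_infix_right h⟩
    · have hl₁ : l₁.length ≤ N := by simp only [List.length_append] at hl; omega
      exact Or.inr ⟨hl, List.infix_append_iff.2 (Or.inr (Or.inr
        ⟨l₁, l₂, rfl, suffix_rtake_of_suffix h₁ hl₁, h₂⟩))⟩
  · rintro (⟨hl, h⟩ | ⟨hl, h⟩)
    · exact ⟨hl, List.infix_append_of_infix_left h⟩
    · exact ⟨hl, h.trans (List.suffix_append_self_iff.2 (rtake_suffix u N)).isInfix⟩

def infixWindow (N : ℕ) (y : List α) : Set (List α) × List α := (shortInfixes N y, y.rtake N)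

theorem infixWindow_append_congr {N : ℕ} {u v : List α} (h : infixWindow N u = infixWindow N v)
    (z : List α) : infixWindow N (u ++ z) = infixWindow N (v ++ z) := by
  obtain ⟨hinf, htake⟩ := Prod.mk.inj h
  simp only [infixWindow]
  rw [shortInfixes_append N u, shortInfixes_append N v, rtake_append u, rtake_append v, hinf, htake]

def hairpinWindow (m k : ℕ) (x : List α) : (Set (List α) × List α) × List α :=
  (infixWindow (m + k) (x.rdrop k), x.rtake k)

theorem hairpinWindow_append_congr {m k : ℕ} {u v : List α}
    (h : hairpinWindow m k u = hairpinWindow m k v) (z : List α) :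
    hairpinWindow m k (u ++ z) = hairpinWindow m k (v ++ z) := by
  obtain ⟨hwin, htake⟩ := Prod.mk.inj h
  simp only [hairpinWindow, rdrop_append u, rdrop_append v, rtake_append u, rtake_append v, htake]
  rw [infixWindow_append_congr hwin]

theorem finite_range_hairpinWindow [Finite α] (m k : ℕ) :
    (Set.range (hairpinWindow (α := α) m k)).Finite := by
  refine ((((List.finite_length_le α (m + k)).finite_subsets).prod
    (List.finite_length_le α (m + k))).prod (List.finite_length_le α k)).subset ?_
  rintro _ ⟨x, rfl⟩
  simp only [hairpinWindow, infixWindow, Set.mem_prod, Set.mem_ofPred_eq, length_rtake]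
  exact ⟨⟨fun l hl => hl.1, min_le_left _ _⟩, min_le_left _ _⟩

end Window

def rHIExtensions (bar : V → V) (m k : ℕ) (x : List V) : Set (List V) :=
  {p | x ++ p ∈ rHI bar m k x}

theorem exists_append_of_mem_rHI {bar : V → V} {m k : ℕ} {x v : List V}
    (h : v ∈ rHI bar m k x) : ∃ p, v = x ++ p := by
  unfold rHI at h
  split_ifs at h
  · obtain ⟨-, γ, -, -, -, -, -, rfl⟩ := h
    exact ⟨_, rfl⟩
  · exact ⟨[], by simpa using h⟩

theorem rHIstarL_eq_appendClosure (bar : V → V) (m k : ℕ) (L : Set (List V)) :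
    rHIstarL bar m k L = {w | AppendClosure (rHIExtensions bar m k) L w} := by
  ext y
  simp only [rHIstarL, rHIstar, Set.mem_iUnion, Set.mem_ofPred_eq]
  constructor
  · rintro ⟨w, hw, n, hy⟩
    induction n generalizing y with
    | zero =>
      rw [rHIn, Set.mem_singleton_iff] at hy
      exact hy ▸ .base hw
    | succ n ih =>
      simp only [rHIn, Set.mem_iUnion] at hy
      obtain ⟨x, hx, hy⟩ := hy
      obtain ⟨p, rfl⟩ := exists_append_of_mem_rHI hy
      exact (ih x hx).append hy
  · intro hy
    induction hy with
    | base hw => exact ⟨_, hw, 0, rfl⟩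
    | append _ hp ih =>
      obtain ⟨w, hw, n, hx⟩ := ih
      exact ⟨w, hw, n + 1, Set.mem_biUnion hx hp⟩

theorem exists_rightHairpin_iff {bar : V → V} {k : ℕ} {x γ α : List V} (hα : α.length = k) :
    (∃ δ β, x = δ ++ γ ++ α ++ β ++ rc bar α) ↔ rc bar α = x.rtake k ∧ γ ++ α <:+: x.rdrop k := by
  have hrc : (rc bar α).length = k := by simp [rc, hα]
  constructor
  · rintro ⟨δ, β, hx⟩
    obtain ⟨hA, ht⟩ := (eq_append_iff_rdrop_rtake hrc).1 hx
    exact ⟨ht, hA ▸ ⟨δ, β, by simp⟩⟩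
  · rintro ⟨ht, δ, β, hA⟩
    refine ⟨δ, β, (eq_append_iff_rdrop_rtake hrc).2 ⟨?_, ht⟩⟩
    rw [← hA]
    simp

theorem mem_rHIExtensions_iff {bar : V → V} {m k : ℕ} {x p : List V} :
    p ∈ rHIExtensions bar m k x ↔ p = [] ∨ ∃ γ α, γ.length ≤ m ∧ α.length = k ∧
      rc bar α = x.rtake k ∧ γ ++ α <:+: x.rdrop k ∧ p = rc bar γ := by
  unfold rHIExtensions rHI
  split_ifs with hdecomp
  · simp only [Set.mem_ofPred_eq, List.append_cancel_left_eq]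
    constructor
    · rintro ⟨δ, γ, α, β, hx, hα, hγ, rfl⟩
      obtain ⟨hrc, hinfix⟩ := (exists_rightHairpin_iff hα).1 ⟨δ, β, hx⟩
      exact Or.inr ⟨γ, α, hγ, hα, hrc, hinfix, rfl⟩
    · rintro (rfl | ⟨γ, α, hγ, hα, hrc, hinfix, rfl⟩)
      · obtain ⟨δ, γ, α, β, hx, hα, -⟩ := hdecomp
        exact ⟨δ ++ γ, [], α, β, by simpa using hx, hα, by simp, by simp [rc]⟩
      · obtain ⟨δ, β, hx⟩ := (exists_rightHairpin_iff hα).2 ⟨hrc, hinfix⟩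
        exact ⟨δ, γ, α, β, hx, hα, hγ, rfl⟩
  · rw [Set.mem_ofPred_eq, Set.mem_singleton_iff, List.append_right_eq_self, iff_self_or]
    rintro ⟨γ, α, hγ, hα, hrc, hinfix, -⟩
    obtain ⟨δ, β, hx⟩ := (exists_rightHairpin_iff hα).2 ⟨hrc, hinfix⟩
    exact absurd ⟨δ, γ, α, β, hx, hα, hγ⟩ hdecomp

theorem length_le_of_mem_rHIExtensions {bar : V → V} {m k : ℕ} {x p : List V}
    (h : p ∈ rHIExtensions bar m k x) : p.length ≤ m := by
  rcases mem_rHIExtensions_iff.1 h with rfl | ⟨γ, α, hγ, -, -, -, rfl⟩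
  · simp
  · simpa [rc] using hγ

theorem rHIExtensions_congr {bar : V → V} {m k : ℕ} {u v : List V}
    (h : hairpinWindow m k u = hairpinWindow m k v) :
    rHIExtensions bar m k u = rHIExtensions bar m k v := by
  have hinf : shortInfixes (m + k) (u.rdrop k) = shortInfixes (m + k) (v.rdrop k) :=
    congrArg (·.1.1) h
  have htake : u.rtake k = v.rtake k := congrArg (·.2) h
  have hinfix {γ α : List V} (hγ : γ.length ≤ m) (hα : α.length = k) :
      γ ++ α <:+: u.rdrop k ↔ γ ++ α <:+: v.rdrop k := by
    have hlen : γ.length + α.length ≤ m + k := by omega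
    simpa [shortInfixes, hlen] using Set.ext_iff.1 hinf (γ ++ α)
  ext p
  simp only [mem_rHIExtensions_iff, htake]
  exact or_congr_right <| exists₂_congr fun γ α => and_congr_right fun hγ =>
    and_congr_right fun hα => and_congr_right' <| and_congr_left' (hinfix hγ hα)

variable {V : Type} [Fintype V]

theorem regular_closed_rHIstarL_general (bar : V → V) (m k : ℕ)
    (L : Set (List V)) (hL : Language.IsRegular (lang L)) :
    Language.IsRegular (lang (rHIstarL bar m k L)) := by
  rw [lang, rHIstarL_eq_appendClosure]
  exact isRegular_appendClosure hL (finite_range_hairpinWindow m k)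
    (fun _ _ h a => hairpinWindow_append_congr h [a]) (fun _ _ => rHIExtensions_congr)
    (fun _ _ => length_le_of_mem_rHIExtensions)

theorem regular_closed_rHIstarL (bar : V → V) (hbar : ∀ a, bar (bar a) = a) (m k : ℕ) (hm : 1 ≤ m) (hk : 1 ≤ k)
    (L : Set (List V)) (hL : Language.IsRegular (lang L)) :
    Language.IsRegular (lang (rHIstarL bar m k L)) :=
  regular_closed_rHIstarL_general bar m k L hL

end Hairpin
end

section
/- The family of context-free languages is closed under iterated m-bounded k-hairpin incompletion: if L is context-free, then HI*_{m,k}(L) is context-free, for all m, k ≥ 1. -/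
/-!
Whether a right (left) incompletion step `v ↦ v ++ γ̄ᴿ` (`v ↦ γ̄ᴿ ++ v`) is allowed depends only on
the first and last `k` letters of `v` and on its factors of length at most `m + 2k`. Recording the
first and last `m + 2k` letters instead makes this profile multiplicative, so the words with a given
profile are the classes of a congruence of finite index on the free monoid. A grammar for `L` can
then be annotated with the class of the word each nonterminal derives, as in the intersection of a
context-free language with a regular one, and the incompletion steps become linear rules
`⟨s * [z]⟩ → ⟨s⟩ z` and `⟨[z] * s⟩ → z ⟨s⟩` between classes, for the finitely many words `z = γ̄ᴿ`.
-/

open scoped Classical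

namespace List

variable {α β : Type*}

theorem forall₂_append_left_iff {R : α → β → Prop} {l₁ l₂ : List α} {u : List β} :
    Forall₂ R (l₁ ++ l₂) u ↔ ∃ u₁ u₂, u = u₁ ++ u₂ ∧ Forall₂ R l₁ u₁ ∧ Forall₂ R l₂ u₂ := by
  refine ⟨fun h => ?_, fun ⟨u₁, u₂, hu, h₁, h₂⟩ => hu ▸ rel_append h₁ h₂⟩
  induction l₁ generalizing u with
  | nil => exact ⟨[], u, rfl, .nil, h⟩
  | cons a l₁ ih =>
    obtain ⟨b, u', hab, h', rfl⟩ := forall₂_cons_left_iff.1 h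
    obtain ⟨u₁, u₂, rfl, h₁, h₂⟩ := ih h'
    exact ⟨b :: u₁, u₂, rfl, .cons hab h₁, h₂⟩

variable {x y v : List α} {n : ℕ}

theorem exists_eq_append_append_iff :
    (∃ δ β, v = δ ++ x ++ β ++ y) ↔ y <:+ v ∧ ∃ t, t.length = y.length ∧ x ++ t <:+: v := by
  constructor
  · rintro ⟨δ, β, rfl⟩
    refine ⟨suffix_append _ _, (β ++ y).take y.length, by simp, δ, (β ++ y).drop y.length, ?_⟩
    simp
  · rintro ⟨hy, t, ht, p, q, rfl⟩
    obtain ⟨β, hβ⟩ : y <:+ t ++ q :=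
      suffix_of_suffix_length_le hy ⟨p ++ x, by simp⟩ (by simp [ht])
    exact ⟨p, β, by simp [hβ]⟩

theorem exists_eq_append_append_iff' :
    (∃ β δ, v = y ++ β ++ x ++ δ) ↔ y <+: v ∧ ∃ t, t.length = y.length ∧ t ++ x <:+: v := by
  constructor
  · rintro ⟨β, δ, rfl⟩
    refine ⟨by simp [append_assoc], (y ++ β).drop β.length, by simp, (y ++ β).take β.length, δ,
      ?_⟩
    rw [← append_assoc, take_append_drop]
  · rintro ⟨hy, t, ht, p, q, rfl⟩
    obtain ⟨β, hβ⟩ : y <+: p ++ t := prefix_of_prefix_length_le hy (by simp) (by simp [ht])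
    exact ⟨β, q, by simp [← append_assoc, hβ]⟩

theorem rtake_suffix (l : List α) (n : ℕ) : l.rtake n <:+ l := drop_suffix _ _

theorem suffix_rtake_iff : x <:+ y.rtake n ↔ x <:+ y ∧ x.length ≤ n := by
  rw [rtake_eq_reverse_take_reverse, ← reverse_prefix, reverse_reverse, prefix_take_iff,
    reverse_prefix, length_reverse]

theorem take_append_take (n : ℕ) (x y : List α) :
    (x ++ y).take n = (x.take n ++ y.take n).take n := by
  simp only [take_append, take_take, length_take, min_self]
  congr 2
  omega

theorem rtake_append_rtake (n : ℕ) (x y : List α) :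
    (x ++ y).rtake n = (x.rtake n ++ y.rtake n).rtake n := by
  simp only [rtake_eq_reverse_take_reverse, reverse_append, reverse_reverse]
  rw [take_append_take]

theorem infix_append_iff_of_length_le {u : List α} (hx : x.length ≤ n) :
    x <:+: u ++ v ↔ x <:+: u ∨ x <:+: v ∨ x <:+: u.rtake n ++ v.take n := by
  constructor
  · intro h
    rcases infix_append_iff.1 h with h | h | ⟨x₁, x₂, rfl, h₁, h₂⟩
    · exact .inl h
    · exact .inr (.inl h)
    · rw [length_append] at hx
      refine .inr (.inr (infix_append_iff.2 (.inr (.inr ⟨x₁, x₂, rfl, ?_, ?_⟩))))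
      · exact suffix_rtake_iff.2 ⟨h₁, by omega⟩
      · exact prefix_take_iff.2 ⟨h₂, by omega⟩
  · rintro (h | h | h)
    · exact h.trans infix_append_left
    · exact h.trans infix_append_right
    · rcases infix_append_iff.1 h with h | h | ⟨x₁, x₂, rfl, h₁, h₂⟩
      · exact h.trans ((rtake_suffix ..).isInfix.trans infix_append_left)
      · exact h.trans ((take_prefix ..).isInfix.trans infix_append_right)
      · exact infix_append_iff.2 (.inr (.inr ⟨x₁, x₂, rfl,
          h₁.trans (rtake_suffix ..), h₂.trans (take_prefix ..)⟩))

end List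

namespace ContextFreeGrammar

variable {T N : Type*}

def symbolLang (σ : N → Language T) : Symbol T N → Language T
  | .terminal a => {[a]}
  | .nonterminal A => σ A

def sententialLang (σ : N → Language T) (s : List (Symbol T N)) : Language T :=
  (s.map (symbolLang σ)).prod

lemma sententialLang_append (σ : N → Language T) (s t : List (Symbol T N)) :
    sententialLang σ (s ++ t) = sententialLang σ s * sententialLang σ t := by
  simp [sententialLang]

lemma sententialLang_nonterminal (σ : N → Language T) (A : N) :
    sententialLang σ [.nonterminal A] = σ A := by
  simp [sententialLang, symbolLang]

lemma mem_sententialLang_terminals {σ : N → Language T} {v w : List T} :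
    v ∈ sententialLang σ (w.map .terminal) ↔ v = w := by
  induction w generalizing v with
  | nil => exact Language.mem_one v
  | cons a w ih =>
    simp only [sententialLang, List.map_cons, List.prod_cons] at ih ⊢
    simp only [Language.mem_mul, ih]
    constructor
    · rintro ⟨_, rfl, _, rfl, rfl⟩
      rfl
    · rintro rfl
      exact ⟨[a], rfl, w, rfl, rfl⟩

theorem mem_sententialLang_of_derives {g : ContextFreeGrammar T} {σ : g.NT → Language T}
    (hσ : ∀ r ∈ g.rules, sententialLang σ r.output ≤ σ r.input)
    {s : List (Symbol T g.NT)} {w : List T} (h : g.Derives s (w.map .terminal)) :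
    w ∈ sententialLang σ s := by
  induction h using Relation.ReflTransGen.head_induction_on with
  | refl => exact mem_sententialLang_terminals.2 rfl
  | head hstep _ ih =>
    obtain ⟨r, hr, hrw⟩ := hstep
    obtain ⟨p, q, rfl, rfl⟩ := hrw.exists_parts
    simp only [sententialLang_append] at ih ⊢
    have hle : sententialLang σ p * sententialLang σ r.output * sententialLang σ q ≤
        sententialLang σ p * sententialLang σ [.nonterminal r.input] * sententialLang σ q := by
      gcongr
      simpa [sententialLang_nonterminal] using hσ r hr
    exact hle ih

end ContextFreeGrammar

open ContextFreeGrammar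

variable {T : Type*}

inductive ExtensionClosure (onRight onLeft : List T → List T → Prop) (L : Language T) :
    List T → Prop
  | base {w} : w ∈ L → ExtensionClosure onRight onLeft L w
  | append {v z} : ExtensionClosure onRight onLeft L v → onRight v z →
      ExtensionClosure onRight onLeft L (v ++ z)
  | prepend {v z} : ExtensionClosure onRight onLeft L v → onLeft v z →
      ExtensionClosure onRight onLeft L (z ++ v)

namespace ExtensionClosure

inductive NT (N M : Type)
  | core (A : N) (s : M)
  | reach (s : M)
  | start

variable {N M : Type}

inductive Refines : Symbol T N → Symbol T (NT N M) → Prop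
  | terminal (a : T) : Refines (.terminal a) (.terminal a)
  | nonterminal (A : N) (s : M) : Refines (.nonterminal A) (.nonterminal (.core A s))

noncomputable def refinements [Fintype M] :
    List (Symbol T N) → Finset (List (Symbol T (NT N M)))
  | [] => {[]}
  | .terminal a :: s => (refinements s).image (.terminal a :: ·)
  | .nonterminal A :: s =>
      (Finset.univ ×ˢ refinements s).image fun p => .nonterminal (.core A p.1) :: p.2

lemma mem_refinements [Fintype M] {s : List (Symbol T N)} {o : List (Symbol T (NT N M))} :
    o ∈ refinements s ↔ List.Forall₂ Refines s o := by
  induction s generalizing o with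
  | nil => simp [refinements]
  | cons x s ih =>
    cases x with
    | terminal a =>
      simp only [refinements, Finset.mem_image, ih, List.forall₂_cons_left_iff]
      constructor
      · rintro ⟨o', h, rfl⟩
        exact ⟨_, o', .terminal a, h, rfl⟩
      · rintro ⟨b, o', ⟨⟩, h, rfl⟩
        exact ⟨o', h, rfl⟩
    | nonterminal A =>
      simp only [refinements, Finset.mem_image, Finset.mem_product, Finset.mem_univ, true_and,
        ih, List.forall₂_cons_left_iff, Prod.exists]
      constructor
      · rintro ⟨s', o', h, rfl⟩
        exact ⟨_, o', .nonterminal A s', h, rfl⟩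
      · rintro ⟨b, o', ⟨⟩, h, rfl⟩
        exact ⟨_, o', h, rfl⟩

variable [Monoid M] (φ : FreeMonoid T →* M)

/-- The value `1` on `reach` and `start` is never used: refinements contain neither. -/
def weight : Symbol T (NT N M) → M
  | .terminal a => φ (.of a)
  | .nonterminal (.core _ s) => s
  | .nonterminal _ => 1

lemma weight_terminals (w : List T) :
    ((w.map (Symbol.terminal (N := NT N M))).map (weight φ)).prod = φ (.ofList w) := by
  induction w with
  | nil => exact (map_one φ).symm
  | cons a w ih =>
    rw [List.map_cons, List.map_cons, List.prod_cons, ih, FreeMonoid.ofList_cons, map_mul]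
    rfl

variable (onRight onLeft : List T → List T → Prop) (g : ContextFreeGrammar T)

def intendedLang : NT g.NT M → Language T
  | .core A s => {w | g.Derives [.nonterminal A] (w.map .terminal) ∧ φ (.ofList w) = s}
  | .reach s => {v | ExtensionClosure onRight onLeft g.language v ∧ φ (.ofList v) = s}
  | .start => {v | ExtensionClosure onRight onLeft g.language v}

/-- Each nonterminal `X` derives the words of `intendedLang φ onRight onLeft g X`
(`language_grammar`). -/
noncomputable def grammar [Fintype M] (Zr Zl : Finset (List T)) : ContextFreeGrammar T where
  NT := NT g.NT M
  initial := .start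
  rules :=
    (g.rules.biUnion fun r => (refinements r.output).image fun o =>
      ⟨.core r.input (o.map (weight φ)).prod, o⟩) ∪
    (Finset.univ.image fun s => ⟨.reach s, [.nonterminal (.core g.initial s)]⟩) ∪
    (((Finset.univ ×ˢ Zr).filter fun p => ∃ v, φ (.ofList v) = p.1 ∧ onRight v p.2).image
      fun p => ⟨.reach (p.1 * φ (.ofList p.2)), .nonterminal (.reach p.1) :: p.2.map .terminal⟩) ∪
    (((Finset.univ ×ˢ Zl).filter fun p => ∃ v, φ (.ofList v) = p.1 ∧ onLeft v p.2).image
      fun p => ⟨.reach (φ (.ofList p.2) * p.1), p.2.map .terminal ++ [.nonterminal (.reach p.1)]⟩) ∪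
    (Finset.univ.image fun s => ⟨.start, [.nonterminal (.reach s)]⟩)

variable {φ onRight onLeft g}

lemma derives_of_mem_sententialLang {s : List (Symbol T g.NT)} {o : List (Symbol T (NT g.NT M))}
    (ho : List.Forall₂ Refines s o) {w : List T}
    (hw : w ∈ sententialLang (intendedLang φ onRight onLeft g) o) :
    g.Derives s (w.map .terminal) ∧ φ (.ofList w) = (o.map (weight φ)).prod := by
  induction ho generalizing w with
  | nil =>
    obtain rfl : w = [] := hw
    exact ⟨.refl _, map_one φ⟩
  | @cons x y s o hxy _ ih =>
    obtain ⟨w₁, hw₁, w₂, hw₂, rfl⟩ := Language.mem_mul.1 hw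
    obtain ⟨hd, hφ⟩ := ih hw₂
    cases hxy with
    | terminal a =>
      obtain rfl : w₁ = [a] := hw₁
      exact ⟨hd.append_left [.terminal a], by simp [FreeMonoid.ofList_cons, hφ, weight]⟩
    | nonterminal A s' =>
      obtain ⟨hd₁, rfl⟩ := hw₁
      refine ⟨?_, by simp [FreeMonoid.ofList_append, hφ, weight]⟩
      simpa using (hd₁.append_right s).trans (hd.append_left _)

variable [Fintype M] {Zr Zl : Finset (List T)}

theorem sententialLang_output_le_intendedLang
    (hRφ : ∀ v v' z, φ (.ofList v) = φ (.ofList v') → onRight v z → onRight v' z)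
    (hLφ : ∀ v v' z, φ (.ofList v) = φ (.ofList v') → onLeft v z → onLeft v' z)
    {r : ContextFreeRule T (NT g.NT M)} (hr : r ∈ (grammar φ onRight onLeft g Zr Zl).rules) :
    sententialLang (intendedLang φ onRight onLeft g) r.output ≤
      intendedLang φ onRight onLeft g r.input := by
  intro w hw
  unfold grammar at hr
  simp only [Finset.mem_union, Finset.mem_biUnion, Finset.mem_image, Finset.mem_univ,
    true_and, Finset.mem_filter, Finset.mem_product, Prod.exists] at hr
  rcases hr with ((((⟨r₀, hr₀, o, ho, rfl⟩ | ⟨s, rfl⟩) | ⟨s, z, ⟨-, v₀, hv₀, hR₀⟩, rfl⟩) |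
    ⟨s, z, ⟨-, v₀, hv₀, hL₀⟩, rfl⟩) | ⟨s, rfl⟩)
  · obtain ⟨hd, hφ⟩ := derives_of_mem_sententialLang (mem_refinements.1 ho) hw
    exact ⟨Produces.trans_derives ⟨r₀, hr₀, .input_output⟩ hd, hφ⟩
  · rw [sententialLang_nonterminal] at hw
    obtain ⟨hd, rfl⟩ := hw
    exact ⟨.base hd, rfl⟩
  · rw [← List.singleton_append, sententialLang_append, sententialLang_nonterminal] at hw
    obtain ⟨v, ⟨hv, rfl⟩, z', hz', rfl⟩ := Language.mem_mul.1 hw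
    obtain rfl := mem_sententialLang_terminals.1 hz'
    exact ⟨hv.append (hRφ _ _ _ hv₀ hR₀), by simp [FreeMonoid.ofList_append]⟩
  · rw [sententialLang_append, sententialLang_nonterminal] at hw
    obtain ⟨z', hz', v, ⟨hv, rfl⟩, rfl⟩ := Language.mem_mul.1 hw
    obtain rfl := mem_sententialLang_terminals.1 hz'
    exact ⟨hv.prepend (hLφ _ _ _ hv₀ hL₀), by simp [FreeMonoid.ofList_append]⟩
  · rw [sententialLang_nonterminal] at hw
    exact hw.1

lemma core_mem_rules {r : ContextFreeRule T g.NT} (hr : r ∈ g.rules)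
    {o : List (Symbol T (NT g.NT M))} (ho : List.Forall₂ Refines r.output o) :
    ⟨.core r.input (o.map (weight φ)).prod, o⟩ ∈ (grammar φ onRight onLeft g Zr Zl).rules := by
  unfold grammar
  refine Finset.mem_union_left _ (Finset.mem_union_left _ (Finset.mem_union_left _
    (Finset.mem_union_left _ ?_)))
  exact Finset.mem_biUnion.2 ⟨r, hr, Finset.mem_image.2 ⟨o, mem_refinements.2 ho, rfl⟩⟩

lemma seed_mem_rules (s : M) :
    ⟨.reach s, [.nonterminal (.core g.initial s)]⟩ ∈ (grammar φ onRight onLeft g Zr Zl).rules := by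
  unfold grammar
  refine Finset.mem_union_left _ (Finset.mem_union_left _ (Finset.mem_union_left _
    (Finset.mem_union_right _ ?_)))
  exact Finset.mem_image_of_mem _ (Finset.mem_univ s)

lemma append_mem_rules {v z : List T} (hz : z ∈ Zr) (h : onRight v z) :
    ⟨.reach (φ (.ofList v) * φ (.ofList z)), .nonterminal (.reach (φ (.ofList v))) ::
      z.map .terminal⟩ ∈ (grammar φ onRight onLeft g Zr Zl).rules := by
  unfold grammar
  refine Finset.mem_union_left _ (Finset.mem_union_left _ (Finset.mem_union_right _ ?_))
  exact Finset.mem_image.2 ⟨(φ (.ofList v), z),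
    Finset.mem_filter.2 ⟨Finset.mem_product.2 ⟨Finset.mem_univ _, hz⟩, v, rfl, h⟩, rfl⟩

lemma prepend_mem_rules {v z : List T} (hz : z ∈ Zl) (h : onLeft v z) :
    ⟨.reach (φ (.ofList z) * φ (.ofList v)), z.map .terminal ++
      [.nonterminal (.reach (φ (.ofList v)))]⟩ ∈ (grammar φ onRight onLeft g Zr Zl).rules := by
  unfold grammar
  refine Finset.mem_union_left _ (Finset.mem_union_right _ ?_)
  exact Finset.mem_image.2 ⟨(φ (.ofList v), z),
    Finset.mem_filter.2 ⟨Finset.mem_product.2 ⟨Finset.mem_univ _, hz⟩, v, rfl, h⟩, rfl⟩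

lemma start_mem_rules (s : M) :
    ⟨.start, [.nonterminal (.reach s)]⟩ ∈ (grammar φ onRight onLeft g Zr Zl).rules :=
  Finset.mem_union_right _ (Finset.mem_image_of_mem _ (Finset.mem_univ s))

lemma exists_refinement_derives {s : List (Symbol T g.NT)} {w : List T}
    (h : g.Derives s (w.map .terminal)) :
    ∃ o, List.Forall₂ Refines s o ∧ (o.map (weight φ)).prod = φ (.ofList w) ∧
      (grammar φ onRight onLeft g Zr Zl).Derives o (w.map .terminal) := by
  induction h using Relation.ReflTransGen.head_induction_on with
  | refl =>
    refine ⟨w.map .terminal, ?_, weight_terminals φ w, .refl _⟩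
    simpa [List.forall₂_map_left_iff, List.forall₂_map_right_iff, List.forall₂_same] using
      fun a _ => Refines.terminal a
  | head hstep _ ih =>
    obtain ⟨r, hr, hrw⟩ := hstep
    obtain ⟨p, q, rfl, rfl⟩ := hrw.exists_parts
    obtain ⟨o, ho, hφ, hd⟩ := ih
    obtain ⟨o₁₂, o₃, rfl, ho₁₂, ho₃⟩ := List.forall₂_append_left_iff.1 ho
    obtain ⟨o₁, o₂, rfl, ho₁, ho₂⟩ := List.forall₂_append_left_iff.1 ho₁₂
    refine ⟨o₁ ++ [.nonterminal (.core r.input (o₂.map (weight φ)).prod)] ++ o₃,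
      List.rel_append (List.rel_append ho₁ (.cons (.nonterminal _ _) .nil)) ho₃, ?_, ?_⟩
    · simpa [weight, List.prod_append] using hφ
    · exact Produces.trans_derives
        ⟨_, core_mem_rules hr ho₂, ContextFreeRule.rewrites_of_exists_parts _ o₁ o₃⟩ hd

lemma derives_reach (hZr : ∀ v z, onRight v z → z ∈ Zr) (hZl : ∀ v z, onLeft v z → z ∈ Zl)
    {v : List T} (h : ExtensionClosure onRight onLeft g.language v) :
    (grammar φ onRight onLeft g Zr Zl).Derives [.nonterminal (.reach (φ (.ofList v)))]
      (v.map .terminal) := by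
  induction h with
  | @base w hw =>
    obtain ⟨o, ho, hφ, hd⟩ := exists_refinement_derives (φ := φ) hw
    obtain ⟨_, _, ⟨⟩, ⟨⟩, rfl⟩ := List.forall₂_cons_left_iff.1 ho
    obtain rfl : _ = φ (.ofList w) := by simpa [weight] using hφ
    exact Produces.trans_derives ⟨_, seed_mem_rules _, .input_output⟩ hd
  | @append v z _ hz ih =>
    rw [FreeMonoid.ofList_append, map_mul, List.map_append]
    exact Produces.trans_derives ⟨_, append_mem_rules (hZr v z hz) hz, .input_output⟩
      (by simpa using ih.append_right (z.map .terminal))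
  | @prepend v z _ hz ih =>
    rw [FreeMonoid.ofList_append, map_mul, List.map_append]
    exact Produces.trans_derives ⟨_, prepend_mem_rules (hZl v z hz) hz, .input_output⟩
      (ih.append_left (z.map .terminal))

theorem language_grammar
    (hRφ : ∀ v v' z, φ (.ofList v) = φ (.ofList v') → onRight v z → onRight v' z)
    (hLφ : ∀ v v' z, φ (.ofList v) = φ (.ofList v') → onLeft v z → onLeft v' z)
    (hZr : ∀ v z, onRight v z → z ∈ Zr) (hZl : ∀ v z, onLeft v z → z ∈ Zl) :
    (grammar φ onRight onLeft g Zr Zl).language =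
      {v | ExtensionClosure onRight onLeft g.language v} := by
  ext v
  constructor
  · intro hv
    have h : v ∈ sententialLang (intendedLang φ onRight onLeft g) [.nonterminal .start] :=
      mem_sententialLang_of_derives
        (fun _ hr => sententialLang_output_le_intendedLang hRφ hLφ hr) hv
    rwa [sententialLang_nonterminal] at h
  · intro hv
    exact Produces.trans_derives ⟨_, start_mem_rules _, .input_output⟩ (derives_reach hZr hZl hv)

end ExtensionClosure

theorem isContextFree_extensionClosure {M : Type} [Monoid M] [Finite M] (φ : FreeMonoid T →* M)
    {onRight onLeft : List T → List T → Prop}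
    (hRφ : ∀ v v' z, φ (.ofList v) = φ (.ofList v') → onRight v z → onRight v' z)
    (hLφ : ∀ v v' z, φ (.ofList v) = φ (.ofList v') → onLeft v z → onLeft v' z)
    (hRfin : {z | ∃ v, onRight v z}.Finite) (hLfin : {z | ∃ v, onLeft v z}.Finite)
    {L : Language T} (hL : L.IsContextFree) :
    Language.IsContextFree {v | ExtensionClosure onRight onLeft L v} := by
  obtain ⟨g, rfl⟩ := hL
  have := Fintype.ofFinite M
  exact ⟨_, ExtensionClosure.language_grammar (Zr := hRfin.toFinset) (Zl := hLfin.toFinset)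
    hRφ hLφ (fun v _ h => hRfin.mem_toFinset.2 ⟨v, h⟩) (fun v _ h => hLfin.mem_toFinset.2 ⟨v, h⟩)⟩

namespace Hairpin

variable {V : Type}

def RightIncompletion (bar : V → V) (m k : ℕ) (v z : List V) : Prop :=
  ∃ δ γ α β : List V, v = δ ++ γ ++ α ++ β ++ rc bar α ∧ α.length = k ∧ γ.length ≤ m ∧
    z = rc bar γ

def LeftIncompletion (bar : V → V) (m k : ℕ) (v z : List V) : Prop :=
  ∃ α β γ δ : List V, v = α ++ β ++ rc bar α ++ γ ++ δ ∧ α.length = k ∧ γ.length ≤ m ∧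
    z = rc bar γ

variable {bar : V → V} {m k : ℕ}

lemma mem_rHI_iff {u v : List V} :
    u ∈ rHI bar m k v ↔ u = v ∨ ∃ z, RightIncompletion bar m k v z ∧ u = v ++ z := by
  unfold rHI
  split_ifs with h
  · constructor
    · rintro ⟨δ, γ, α, β, hv, hα, hγ, rfl⟩
      exact .inr ⟨_, ⟨δ, γ, α, β, hv, hα, hγ, rfl⟩, rfl⟩
    · rintro (rfl | ⟨_, ⟨δ, γ, α, β, hv, hα, hγ, rfl⟩, rfl⟩)
      · obtain ⟨δ, γ, α, β, hv, hα, -⟩ := h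
        exact ⟨δ ++ γ, [], α, β, by simp [hv], hα, Nat.zero_le _, by simp [rc]⟩
      · exact ⟨δ, γ, α, β, hv, hα, hγ, rfl⟩
  · simp only [Set.mem_singleton_iff, iff_self_or]
    rintro ⟨_, ⟨δ, γ, α, β, hv, hα, hγ, rfl⟩, rfl⟩
    exact absurd ⟨δ, γ, α, β, hv, hα, hγ⟩ h

lemma mem_lHI_iff {u v : List V} :
    u ∈ lHI bar m k v ↔ u = v ∨ ∃ z, LeftIncompletion bar m k v z ∧ u = z ++ v := by
  unfold lHI
  split_ifs with h
  · constructor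
    · rintro ⟨α, β, γ, δ, hv, hα, hγ, rfl⟩
      exact .inr ⟨_, ⟨α, β, γ, δ, hv, hα, hγ, rfl⟩, rfl⟩
    · rintro (rfl | ⟨_, ⟨α, β, γ, δ, hv, hα, hγ, rfl⟩, rfl⟩)
      · obtain ⟨α, β, γ, δ, hv, hα, -⟩ := h
        exact ⟨α, β, [], γ ++ δ, by simp [hv], hα, Nat.zero_le _, by simp [rc]⟩
      · exact ⟨α, β, γ, δ, hv, hα, hγ, rfl⟩
  · simp only [Set.mem_singleton_iff, iff_self_or]
    rintro ⟨_, ⟨α, β, γ, δ, hv, hα, hγ, rfl⟩, rfl⟩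
    exact absurd ⟨α, β, γ, δ, hv, hα, hγ⟩ h

theorem HIstarL_eq_extensionClosure (L : Set (List V)) :
    HIstarL bar m k L =
      {v | ExtensionClosure (RightIncompletion bar m k) (LeftIncompletion bar m k) (lang L) v} := by
  ext v
  simp only [HIstarL, HIstar, Set.mem_iUnion, exists_prop]
  constructor
  · rintro ⟨w, hw, n, hn⟩
    induction n generalizing v with
    | zero => exact hn ▸ .base hw
    | succ n ih =>
      obtain ⟨u, hu, hv | hv⟩ := Set.mem_iUnion₂.1 hn
      · rcases mem_rHI_iff.1 hv with rfl | ⟨z, hz, rfl⟩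
        exacts [ih _ hu, (ih _ hu).append hz]
      · rcases mem_lHI_iff.1 hv with rfl | ⟨z, hz, rfl⟩
        exacts [ih _ hu, (ih _ hu).prepend hz]
  · intro h
    induction h with
    | @base w hw => exact ⟨w, hw, 0, rfl⟩
    | @append v z _ hz ih =>
      obtain ⟨w, hw, n, hn⟩ := ih
      exact ⟨w, hw, n + 1, Set.mem_biUnion hn (.inl (mem_rHI_iff.2 (.inr ⟨z, hz, rfl⟩)))⟩
    | @prepend v z _ hz ih =>
      obtain ⟨w, hw, n, hn⟩ := ih
      exact ⟨w, hw, n + 1, Set.mem_biUnion hn (.inr (mem_lHI_iff.2 (.inr ⟨z, hz, rfl⟩)))⟩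

structure Profile (V : Type) where
  pre : List V
  suf : List V
  factors : Set (List V)

def profile (n : ℕ) (u : List V) : Profile V where
  pre := u.take n
  suf := u.rtake n
  factors := {x | x.length ≤ n ∧ x <:+: u}

def Profile.append (n : ℕ) (P Q : Profile V) : Profile V where
  pre := (P.pre ++ Q.pre).take n
  suf := (P.suf ++ Q.suf).rtake n
  factors := P.factors ∪ Q.factors ∪ {x | x.length ≤ n ∧ x <:+: P.suf ++ Q.pre}

lemma profile_append (n : ℕ) (u v : List V) :
    profile n (u ++ v) = (profile n u).append n (profile n v) := by
  simp only [profile, Profile.append, Profile.mk.injEq]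
  refine ⟨List.take_append_take n u v, List.rtake_append_rtake n u v, ?_⟩
  ext x
  simp only [Set.mem_union]
  constructor
  · rintro ⟨hx, h⟩
    rcases (List.infix_append_iff_of_length_le hx).1 h with h | h | h
    exacts [.inl (.inl ⟨hx, h⟩), .inl (.inr ⟨hx, h⟩), .inr ⟨hx, h⟩]
  · rintro ((⟨hx, h⟩ | ⟨hx, h⟩) | ⟨hx, h⟩) <;>
      exact ⟨hx, (List.infix_append_iff_of_length_le hx).2 (by tauto)⟩

theorem finite_range_profile [Finite V] (n : ℕ) : (Set.range (profile (V := V) n)).Finite := by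
  have hlen := List.finite_length_le V n
  refine ((hlen.prod (hlen.prod hlen.finite_subsets)).image
    fun p => (⟨p.1, p.2.1, p.2.2⟩ : Profile V)).subset ?_
  rintro _ ⟨u, rfl⟩
  refine ⟨(u.take n, u.rtake n, {x | x.length ≤ n ∧ x <:+: u}), ⟨?_, ?_, fun x hx => hx.1⟩, rfl⟩
  · simp
  · show (u.rtake n).length ≤ n
    simp only [List.rtake, List.length_drop]
    omega

def profileCon (n : ℕ) : Con (FreeMonoid V) where
  toSetoid := Setoid.ker (profile n ∘ FreeMonoid.toList)
  mul' {u u' v v'} hu hv := by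
    change profile n (u.toList ++ v.toList) = profile n (u'.toList ++ v'.toList)
    rw [profile_append, profile_append]
    exact congrArg₂ (Profile.append n) hu hv

instance [Finite V] (n : ℕ) : Finite (profileCon (V := V) n).Quotient :=
  have : Finite (Set.range (profile n ∘ FreeMonoid.toList (α := V))) :=
    ((finite_range_profile n).subset (Set.range_comp_subset_range _ _)).to_subtype
  Finite.of_equiv _ (Setoid.quotientKerEquivRange _).symm

variable {n : ℕ} {u v x : List V}

lemma prefix_of_profile_eq (h : profile n u = profile n v) (hx : x.length ≤ n) (hu : x <+: u) :
    x <+: v := by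
  have hpre : u.take n = v.take n := congrArg Profile.pre h
  exact (List.prefix_take_iff.1 (hpre ▸ List.prefix_take_iff.2 ⟨hu, hx⟩)).1

lemma suffix_of_profile_eq (h : profile n u = profile n v) (hx : x.length ≤ n) (hu : x <:+ u) :
    x <:+ v := by
  have hsuf : u.rtake n = v.rtake n := congrArg Profile.suf h
  exact (List.suffix_rtake_iff.1 (hsuf ▸ List.suffix_rtake_iff.2 ⟨hu, hx⟩)).1

lemma infix_of_profile_eq (h : profile n u = profile n v) (hx : x.length ≤ n) (hu : x <:+: u) :
    x <:+: v :=
  (h ▸ ⟨hx, hu⟩ : x ∈ (profile n v).factors).2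

/-- The decomposition `u = δγαβᾱᴿ` is witnessed by the suffix `ᾱᴿ` together with the factor `γαt`,
`|t| = k`, of length at most `m + 2k`. -/
lemma RightIncompletion.of_profile_eq (h : profile (m + 2 * k) u = profile (m + 2 * k) v)
    {z : List V} (hz : RightIncompletion bar m k u z) : RightIncompletion bar m k v z := by
  obtain ⟨δ, γ, α, β, hu, hα, hγ, rfl⟩ := hz
  obtain ⟨hsuf, t, ht, hinf⟩ := (List.exists_eq_append_append_iff (v := u) (x := γ ++ α)
    (y := rc bar α)).1 ⟨δ, β, by simp [hu]⟩
  obtain ⟨δ', β', rfl⟩ := List.exists_eq_append_append_iff.2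
    ⟨suffix_of_profile_eq h (by simp [rc, hα]; omega) hsuf, t, ht,
      infix_of_profile_eq h (by simp [rc, ht, hα]; omega) hinf⟩
  exact ⟨δ', γ, α, β', by simp, hα, hγ, rfl⟩

lemma LeftIncompletion.of_profile_eq (h : profile (m + 2 * k) u = profile (m + 2 * k) v)
    {z : List V} (hz : LeftIncompletion bar m k u z) : LeftIncompletion bar m k v z := by
  obtain ⟨α, β, γ, δ, hu, hα, hγ, rfl⟩ := hz
  obtain ⟨hpre, t, ht, hinf⟩ := (List.exists_eq_append_append_iff' (v := u) (x := rc bar α ++ γ)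
    (y := α)).1 ⟨β, δ, by simp [hu]⟩
  obtain ⟨β', δ', rfl⟩ := List.exists_eq_append_append_iff'.2
    ⟨prefix_of_profile_eq h (by omega) hpre, t, ht,
      infix_of_profile_eq h (by simp [rc, ht, hα]; omega) hinf⟩
  exact ⟨α, β', γ, δ', by simp, hα, hγ, rfl⟩

theorem finite_rightIncompletions [Finite V] : {z | ∃ v, RightIncompletion bar m k v z}.Finite :=
  ((List.finite_length_le V m).image (rc bar)).subset <| by
    rintro _ ⟨_, _, γ, _, _, -, -, hγ, rfl⟩
    exact ⟨γ, hγ, rfl⟩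

theorem finite_leftIncompletions [Finite V] : {z | ∃ v, LeftIncompletion bar m k v z}.Finite :=
  ((List.finite_length_le V m).image (rc bar)).subset <| by
    rintro _ ⟨_, _, _, γ, _, -, -, hγ, rfl⟩
    exact ⟨γ, hγ, rfl⟩

variable {V : Type} [Fintype V]

theorem contextFree_closed_HIstarL_general (bar : V → V) (m k : ℕ)
    (L : Set (List V)) (hL : Language.IsContextFree (lang L)) :
    Language.IsContextFree (lang (HIstarL bar m k L)) := by
  rw [HIstarL_eq_extensionClosure]
  exact isContextFree_extensionClosure (profileCon (m + 2 * k)).mk'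
    (onRight := RightIncompletion bar m k) (onLeft := LeftIncompletion bar m k)
    (fun _ _ _ h => RightIncompletion.of_profile_eq ((Con.eq _).1 h))
    (fun _ _ _ h => LeftIncompletion.of_profile_eq ((Con.eq _).1 h))
    finite_rightIncompletions finite_leftIncompletions hL

theorem contextFree_closed_HIstarL (bar : V → V) (hbar : ∀ a, bar (bar a) = a) (m k : ℕ) (hm : 1 ≤ m) (hk : 1 ≤ k)
    (L : Set (List V)) (hL : Language.IsContextFree (lang L)) :
    Language.IsContextFree (lang (HIstarL bar m k L)) :=
  contextFree_closed_HIstarL_general bar m k L hL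

end Hairpin
end

section
/- If a class of languages is closed under gsm-mappings (generalized sequential machine mappings), then it is closed under the (non-iterated) m-bounded k-hairpin incompletion HI_{m,k} for all m, k ≥ 1. In particular, every trio is closed under m-bounded k-hairpin incompletion. -/
open scoped Classical

namespace Hairpin

variable {V : Type}

/-- A (nondeterministic) generalized sequential machine from alphabet `α` to alphabet `β`. -/
structure GSM (α β : Type) where
  Q : Type
  [fin : Fintype Q]
  start : Q
  accept : Set Q
  step : Q → α → Set (Q × List β)

/-- `M.Run q u v q'` : reading input `u` from state `q`, the gsm `M` can output `v`,
ending in state `q'`. -/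
inductive GSM.Run {α β : Type} (M : GSM α β) : M.Q → List α → List β → M.Q → Prop
  | nil (q : M.Q) : GSM.Run M q [] [] q
  | cons {q q' qf : M.Q} {a : α} {u : List α} {out v : List β} :
      (q', out) ∈ M.step q a → GSM.Run M q' u v qf → GSM.Run M q (a :: u) (out ++ v) qf

/-- The gsm mapping of a language. -/
def GSM.map {α β : Type} (M : GSM α β) (L : Set (List α)) : Set (List β) :=
  { v | ∃ u ∈ L, ∃ qf ∈ M.accept, M.Run M.start u v qf }

variable {V : Type} [Fintype V]

/-!
A word of `HI_{m,k}(w)` arises from `w` by one of finitely many guesses: keep `w`, or fix `(γ, α)`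
with `|γ| ≤ m`, `|α| = k` and append `rc γ` to a `w` of the shape `δγαβ(rc α)`, resp. prepend it
to a `w` of the shape `αβ(rc α)γδ`. Each shape is a gapped pattern, recognised by the automaton
whose states are the suffixes of the pattern; a gsm copies its input while running it and emits
`rc γ` together with the last, resp. first, letter. The nondeterministic union of these finitely
many gsms maps `L` onto `HIL L`.
-/
attribute [instance] GSM.fin

namespace GSM

variable {α β : Type}

def TransducesFrom (M : GSM α β) (q : M.Q) (u : List α) (v : List β) : Prop :=
  ∃ qf ∈ M.accept, M.Run q u v qf

abbrev Transduces (M : GSM α β) : List α → List β → Prop := M.TransducesFrom M.start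

variable {M : GSM α β}

theorem mem_map_iff {L : Set (List α)} {v : List β} :
    v ∈ M.map L ↔ ∃ w ∈ L, M.Transduces w v := Iff.rfl

theorem transducesFrom_nil_iff {q : M.Q} {v : List β} :
    M.TransducesFrom q [] v ↔ v = [] ∧ q ∈ M.accept := by
  constructor
  · rintro ⟨qf, hqf, ⟨⟩⟩
    exact ⟨rfl, hqf⟩
  · rintro ⟨rfl, hq⟩
    exact ⟨q, hq, .nil q⟩

theorem transducesFrom_cons_iff {q : M.Q} {a : α} {u : List α} {v : List β} :
    M.TransducesFrom q (a :: u) v ↔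
      ∃ q' out v', (q', out) ∈ M.step q a ∧ M.TransducesFrom q' u v' ∧ v = out ++ v' := by
  constructor
  · rintro ⟨qf, hqf, hrun⟩
    cases hrun with
    | cons hstep hrun => exact ⟨_, _, _, hstep, ⟨qf, hqf, hrun⟩, rfl⟩
  · rintro ⟨q', out, v', hstep, ⟨qf, hqf, hrun⟩, rfl⟩
    exact ⟨qf, hqf, .cons hstep hrun⟩

theorem transducesFrom_map_iff {N : GSM α β} (f : M.Q → N.Q)
    (hstep : ∀ q a p out, (p, out) ∈ N.step (f q) a ↔ ∃ q', (q', out) ∈ M.step q a ∧ p = f q')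
    (hacc : ∀ q, f q ∈ N.accept ↔ q ∈ M.accept) {q : M.Q} {u : List α} {v : List β} :
    N.TransducesFrom (f q) u v ↔ M.TransducesFrom q u v := by
  induction u generalizing q v with
  | nil => simp only [transducesFrom_nil_iff, hacc]
  | cons a u ih =>
    simp only [transducesFrom_cons_iff, hstep]
    constructor
    · rintro ⟨_, out, v', ⟨q', hq', rfl⟩, hrun, rfl⟩
      exact ⟨q', out, v', hq', ih.1 hrun, rfl⟩
    · rintro ⟨q', out, v', hq', hrun, rfl⟩
      exact ⟨f q', out, v', ⟨q', hq', rfl⟩, ih.2 hrun, rfl⟩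

/-- Nondeterministic choice among finitely many gsms: the first step picks the machine to run. -/
noncomputable def iUnion {ι : Type} [Finite ι] (M : ι → GSM α β) : GSM α β where
  Q := Option (Σ i, (M i).Q)
  fin := Fintype.ofFinite _
  start := none
  accept := {s | match s with
    | none => ∃ i, (M i).start ∈ (M i).accept
    | some ⟨i, q⟩ => q ∈ (M i).accept}
  step
    | none, a => {p | ∃ i q, (q, p.2) ∈ (M i).step (M i).start a ∧ p.1 = some ⟨i, q⟩}
    | some ⟨i, q⟩, a => {p | ∃ q', (q', p.2) ∈ (M i).step q a ∧ p.1 = some ⟨i, q'⟩}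

theorem transduces_iUnion_iff {ι : Type} [Finite ι] {M : ι → GSM α β} {w : List α}
    {v : List β} : (iUnion M).Transduces w v ↔ ∃ i, (M i).Transduces w v := by
  have hsome (i : ι) {q : (M i).Q} {u : List α} {v : List β} :
      (iUnion M).TransducesFrom (some ⟨i, q⟩) u v ↔ (M i).TransducesFrom q u v :=
    transducesFrom_map_iff (N := iUnion M) (fun q => some ⟨i, q⟩)
      (fun _ _ _ _ => Iff.rfl) (fun _ => Iff.rfl)
  cases w with
  | nil =>
    simp only [transducesFrom_nil_iff]
    exact ⟨fun ⟨hv, i, hi⟩ => ⟨i, hv, hi⟩, fun ⟨i, hv, hi⟩ => ⟨hv, i, hi⟩⟩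
  | cons a u =>
    simp only [transducesFrom_cons_iff]
    constructor
    · rintro ⟨_, out, v', ⟨i, q, hq, rfl⟩, hrun, rfl⟩
      exact ⟨i, q, out, v', hq, (hsome i).1 hrun, rfl⟩
    · rintro ⟨i, q, out, v', hq, hrun, rfl⟩
      exact ⟨some ⟨i, q⟩, out, v', ⟨i, q, hq, rfl⟩, (hsome i).2 hrun, rfl⟩

def appendOutput (M : GSM α β) (o : List β) : GSM α β where
  Q := Option M.Q
  start := some M.start
  accept := {none}
  step
    | none, _ => ∅
    | some q, a => {p | ∃ q' out, (q', out) ∈ M.step q a ∧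
        (p.1 = some q' ∧ p.2 = out ∨ q' ∈ M.accept ∧ p.1 = none ∧ p.2 = out ++ o)}

theorem transducesFrom_appendOutput_iff {o : List β} {q : M.Q} {u : List α} {v : List β} :
    (M.appendOutput o).TransducesFrom (some q) u v ↔
      u ≠ [] ∧ ∃ v', M.TransducesFrom q u v' ∧ v = v' ++ o := by
  have hnone {u : List α} {v : List β} :
      (M.appendOutput o).TransducesFrom none u v ↔ u = [] ∧ v = [] := by
    cases u <;> simp [transducesFrom_nil_iff, transducesFrom_cons_iff, appendOutput]
  induction u generalizing q v with
  | nil => simp [transducesFrom_nil_iff, appendOutput]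
  | cons a u ih =>
    refine transducesFrom_cons_iff.trans ?_
    simp only [transducesFrom_cons_iff]
    constructor
    · rintro ⟨s, out, v', ⟨q', out', hq', ⟨rfl, rfl⟩ | ⟨hacc, rfl, rfl⟩⟩, hrun, rfl⟩
      · obtain ⟨-, v'', hrun', rfl⟩ := ih.1 hrun
        exact ⟨List.cons_ne_nil _ _, out ++ v'', ⟨q', out, v'', hq', hrun', rfl⟩, by simp⟩
      · obtain ⟨rfl, rfl⟩ := hnone.1 hrun
        refine ⟨List.cons_ne_nil _ _, out', ⟨q', out', [], hq', ?_, by simp⟩, by simp⟩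
        exact transducesFrom_nil_iff.2 ⟨rfl, hacc⟩
    · rintro ⟨-, _, ⟨q', out, v', hq', hrun, rfl⟩, rfl⟩
      by_cases hu : u = []
      · subst hu
        obtain ⟨rfl, hacc⟩ := transducesFrom_nil_iff.1 hrun
        exact ⟨none, out ++ o, [], ⟨q', out, hq', Or.inr ⟨hacc, rfl, rfl⟩⟩, hnone.2 ⟨rfl, rfl⟩,
          by simp⟩
      · exact ⟨some q', out, v' ++ o, ⟨q', out, hq', Or.inl ⟨rfl, rfl⟩⟩, ih.2 ⟨hu, v', hrun, rfl⟩,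
          by simp⟩

theorem transduces_appendOutput_iff {o : List β} {w : List α} {v : List β} :
    (M.appendOutput o).Transduces w v ↔ w ≠ [] ∧ ∃ v', M.Transduces w v' ∧ v = v' ++ o :=
  transducesFrom_appendOutput_iff

def prependOutput (M : GSM α β) (o : List β) : GSM α β where
  Q := Option M.Q
  start := none
  accept := {s | match s with
    | none => False
    | some q => q ∈ M.accept}
  step
    | none, a => {p | ∃ q out, (q, out) ∈ M.step M.start a ∧ p.1 = some q ∧ p.2 = o ++ out}
    | some q, a => {p | ∃ q', (q', p.2) ∈ M.step q a ∧ p.1 = some q'}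

theorem transduces_prependOutput_iff {o : List β} {w : List α} {v : List β} :
    (M.prependOutput o).Transduces w v ↔ w ≠ [] ∧ ∃ v', M.Transduces w v' ∧ v = o ++ v' := by
  have hsome {q : M.Q} {u : List α} {v : List β} :
      (M.prependOutput o).TransducesFrom (some q) u v ↔ M.TransducesFrom q u v :=
    transducesFrom_map_iff (N := M.prependOutput o) some (fun _ _ _ _ => Iff.rfl)
      (fun _ => Iff.rfl)
  cases w with
  | nil => simp [transducesFrom_nil_iff, prependOutput]
  | cons a u =>
    simp only [transducesFrom_cons_iff]
    constructor
    · rintro ⟨_, _, v', ⟨q, out, hq, rfl, rfl⟩, hrun, rfl⟩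
      exact ⟨List.cons_ne_nil _ _, out ++ v', ⟨q, out, v', hq, hsome.1 hrun, rfl⟩, by simp⟩
    · rintro ⟨-, _, ⟨q, out, v', hq, hrun, rfl⟩, rfl⟩
      exact ⟨some q, o ++ out, v', ⟨q, out, hq, rfl, rfl⟩, hsome.2 hrun, by simp⟩

end GSM

/-- Gapped patterns: the item `some a` matches the letter `a`, the item `none` any word. -/
abbrev Pattern (A : Type) := List (Option A)

namespace Pattern

variable {A : Type}

def Matches : Pattern A → List A → Prop
  | [], w => w = []
  | some a :: P, w => ∃ w', w = a :: w' ∧ Matches P w'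
  | none :: P, w => ∃ u w', w = u ++ w' ∧ Matches P w'

/-- The patterns that remain to be matched after reading the letter `a`. -/
def next : Pattern A → A → Set (Pattern A)
  | [], _ => ∅
  | some b :: P, a => {R | b = a ∧ R = P}
  | none :: P, a => insert (none :: P) (next P a)

theorem matches_nil_iff {P : Pattern A} : Matches P [] ↔ ∀ x ∈ P, x = none := by
  induction P with
  | nil => simp [Matches]
  | cons x P ih => cases x <;> simp [Matches, ih]

theorem matches_cons_iff {P : Pattern A} {a : A} {w : List A} :
    Matches P (a :: w) ↔ ∃ R ∈ next P a, Matches R w := by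
  induction P with
  | nil => simp [Matches, next]
  | cons x P ih =>
    cases x with
    | some b => simp [Matches, next, and_comm, eq_comm]
    | none =>
      simp only [Matches, next, Set.mem_insert_iff, exists_eq_or_imp, ← ih]
      constructor
      · rintro ⟨_ | ⟨c, u⟩, w', h, hP⟩
        · obtain rfl : a :: w = w' := h
          exact Or.inr hP
        · obtain ⟨rfl, rfl⟩ := List.cons_eq_cons.1 h
          exact Or.inl ⟨u, w', rfl, hP⟩
      · rintro (⟨u, w', rfl, hP⟩ | hP)
        · exact ⟨a :: u, w', rfl, hP⟩
        · exact ⟨[], a :: w, rfl, hP⟩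

theorem suffix_of_mem_next {P R : Pattern A} {a : A} (h : R ∈ next P a) : R <:+ P := by
  induction P with
  | nil => exact absurd h (Set.notMem_empty R)
  | cons x P ih =>
    cases x with
    | some b => exact h.2 ▸ List.suffix_cons _ _
    | none =>
      rcases h with rfl | h
      · exact List.suffix_refl _
      · exact (ih h).trans (List.suffix_cons _ _)

theorem matches_map_some_append {u w : List A} {P : Pattern A} :
    Matches (u.map some ++ P) w ↔ ∃ w', w = u ++ w' ∧ Matches P w' := by
  induction u generalizing w with
  | nil => simp
  | cons a u ih => simp [Matches, ih]

theorem matches_map_some {u w : List A} : Matches (u.map some) w ↔ w = u := by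
  simpa [Matches] using matches_map_some_append (u := u) (w := w) (P := [])

noncomputable def filterGSM (P : Pattern A) : GSM A A where
  Q := {R // R ∈ P.tails}
  start := ⟨P, (List.mem_tails _ _).2 (List.suffix_refl P)⟩
  accept := {R | ∀ x ∈ R.1, x = none}
  step R a := {p | p.1.1 ∈ next R.1 a ∧ p.2 = [a]}

theorem transducesFrom_filterGSM_iff {P : Pattern A} {R : (filterGSM P).Q} {u v : List A} :
    (filterGSM P).TransducesFrom R u v ↔ v = u ∧ Matches R.1 u := by
  induction u generalizing R v with
  | nil =>
    refine GSM.transducesFrom_nil_iff.trans ?_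
    rw [matches_nil_iff]
    rfl
  | cons a u ih =>
    refine GSM.transducesFrom_cons_iff.trans ?_
    rw [matches_cons_iff]
    constructor
    · rintro ⟨R', _, v', ⟨hR', rfl⟩, hrun, rfl⟩
      obtain ⟨rfl, hR'u⟩ := ih.1 hrun
      exact ⟨rfl, R'.1, hR', hR'u⟩
    · rintro ⟨rfl, R', hR', hR'u⟩
      have hsuf : R' ∈ P.tails :=
        (List.mem_tails _ _).2 ((suffix_of_mem_next hR').trans ((List.mem_tails _ _).1 R.2))
      exact ⟨⟨R', hsuf⟩, [a], u, ⟨hR', rfl⟩, ih.2 ⟨rfl, hR'u⟩, rfl⟩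

theorem transduces_filterGSM_iff {P : Pattern A} {w v : List A} :
    (filterGSM P).Transduces w v ↔ v = w ∧ Matches P w :=
  transducesFrom_filterGSM_iff

end Pattern

section HairpinGSM

open Pattern

variable {A : Type} {bar : A → A}

def rightPattern (bar : A → A) (γ α : List A) : Pattern A :=
  none :: (γ ++ α).map some ++ none :: (rc bar α).map some

def leftPattern (bar : A → A) (γ α : List A) : Pattern A :=
  α.map some ++ none :: (rc bar α ++ γ).map some ++ [none]

theorem matches_rightPattern_iff {γ α w : List A} :
    Matches (rightPattern bar γ α) w ↔ ∃ δ β, w = δ ++ γ ++ α ++ β ++ rc bar α := by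
  simp [rightPattern, Matches, matches_map_some_append, matches_map_some]

theorem matches_leftPattern_iff {γ α w : List A} :
    Matches (leftPattern bar γ α) w ↔ ∃ β δ, w = α ++ β ++ rc bar α ++ γ ++ δ := by
  simp [leftPattern, Matches, matches_map_some_append]

noncomputable def rightGSM (bar : A → A) (γ α : List A) : GSM A A :=
  (filterGSM (rightPattern bar γ α)).appendOutput (rc bar γ)

noncomputable def leftGSM (bar : A → A) (γ α : List A) : GSM A A :=
  (filterGSM (leftPattern bar γ α)).prependOutput (rc bar γ)

theorem transduces_rightGSM_iff {γ α w v : List A} :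
    (rightGSM bar γ α).Transduces w v ↔
      w ≠ [] ∧ (∃ δ β, w = δ ++ γ ++ α ++ β ++ rc bar α) ∧ v = w ++ rc bar γ := by
  simp [rightGSM, GSM.transduces_appendOutput_iff, transduces_filterGSM_iff,
    matches_rightPattern_iff]

theorem transduces_leftGSM_iff {γ α w v : List A} :
    (leftGSM bar γ α).Transduces w v ↔
      w ≠ [] ∧ (∃ β δ, w = α ++ β ++ rc bar α ++ γ ++ δ) ∧ v = rc bar γ ++ w := by
  simp [leftGSM, GSM.transduces_prependOutput_iff, transduces_filterGSM_iff,
    matches_leftPattern_iff]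

end HairpinGSM

section HairpinIncompletion

variable {A : Type} {bar : A → A} {m k : ℕ}

theorem mem_rHI_iff_s14 {w v : List A} :
    v ∈ rHI bar m k w ↔
      v = w ∨ ∃ γ α, γ.length ≤ m ∧ α.length = k ∧ (rightGSM bar γ α).Transduces w v := by
  rw [rHI]
  split_ifs with hd
  · constructor
    · rintro ⟨δ, γ, α, β, rfl, hα, hγ, rfl⟩
      by_cases hw : δ ++ γ ++ α ++ β ++ rc bar α = []
      · -- `w = []` forces `γ = []`, so `v = w`
        simp_all [rc]
      · exact Or.inr ⟨γ, α, hγ, hα, transduces_rightGSM_iff.2 ⟨hw, ⟨δ, β, rfl⟩, rfl⟩⟩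
    · rintro (rfl | ⟨γ, α, hγ, hα, h⟩)
      · obtain ⟨δ, γ, α, β, hw, hα, -⟩ := hd
        exact ⟨δ ++ γ, [], α, β, by simp [hw], hα, by simp, by simp [rc]⟩
      · obtain ⟨-, ⟨δ, β, hw⟩, rfl⟩ := transduces_rightGSM_iff.1 h
        exact ⟨δ, γ, α, β, hw, hα, hγ, rfl⟩
  · refine Set.mem_singleton_iff.trans ⟨Or.inl, ?_⟩
    rintro (h | ⟨γ, α, hγ, hα, h⟩)
    · exact h
    · obtain ⟨-, ⟨δ, β, hw⟩, -⟩ := transduces_rightGSM_iff.1 h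
      exact absurd ⟨δ, γ, α, β, hw, hα, hγ⟩ hd

theorem mem_lHI_iff_s14 {w v : List A} :
    v ∈ lHI bar m k w ↔
      v = w ∨ ∃ γ α, γ.length ≤ m ∧ α.length = k ∧ (leftGSM bar γ α).Transduces w v := by
  rw [lHI]
  split_ifs with hd
  · constructor
    · rintro ⟨α, β, γ, δ, rfl, hα, hγ, rfl⟩
      by_cases hw : α ++ β ++ rc bar α ++ γ ++ δ = []
      · simp_all [rc]
      · exact Or.inr ⟨γ, α, hγ, hα, transduces_leftGSM_iff.2 ⟨hw, ⟨β, δ, rfl⟩, rfl⟩⟩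
    · rintro (rfl | ⟨γ, α, hγ, hα, h⟩)
      · obtain ⟨α, β, γ, δ, hw, hα, -⟩ := hd
        exact ⟨α, β, [], γ ++ δ, by simp [hw], hα, by simp, by simp [rc]⟩
      · obtain ⟨-, ⟨β, δ, hw⟩, rfl⟩ := transduces_leftGSM_iff.1 h
        exact ⟨α, β, γ, δ, hw, hα, hγ, rfl⟩
  · refine Set.mem_singleton_iff.trans ⟨Or.inl, ?_⟩
    rintro (h | ⟨γ, α, hγ, hα, h⟩)
    · exact h
    · obtain ⟨-, ⟨β, δ, hw⟩, -⟩ := transduces_leftGSM_iff.1 h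
      exact absurd ⟨α, β, γ, δ, hw, hα, hγ⟩ hd

variable (A m k) in
abbrev HairpinShape : Type := {s : List A × List A // s.1.length ≤ m ∧ s.2.length = k}

instance [Finite A] : Finite (HairpinShape A m k) :=
  ((List.finite_length_le A m).prod (List.finite_length_eq A k)).to_subtype

variable (bar m k) in
noncomputable def hairpinGSM : Option (HairpinShape A m k ⊕ HairpinShape A m k) → GSM A A
  | none => Pattern.filterGSM [none]
  | some (.inl s) => rightGSM bar s.1.1 s.1.2
  | some (.inr s) => leftGSM bar s.1.1 s.1.2

theorem mem_HI_iff {w v : List A} :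
    v ∈ HI bar m k w ↔ ∃ i, (hairpinGSM bar m k i).Transduces w v := by
  have hid : (Pattern.filterGSM [none]).Transduces w v ↔ v = w := by
    simp [Pattern.transduces_filterGSM_iff, Pattern.Matches]
  simp only [HI, Set.mem_union, mem_rHI_iff_s14, mem_lHI_iff_s14, Option.exists, Sum.exists,
    hairpinGSM, hid, Subtype.exists, Prod.exists, exists_prop, and_assoc]
  exact or_or_distrib_left.symm

theorem HIL_eq_map_iUnion_hairpinGSM [Finite A] (L : Set (List A)) :
    HIL bar m k L = (GSM.iUnion (hairpinGSM bar m k)).map L := by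
  ext v
  simp only [HIL, Set.mem_iUnion, exists_prop, GSM.mem_map_iff, GSM.transduces_iUnion_iff,
    mem_HI_iff]

end HairpinIncompletion

theorem gsm_closed_HIL_general (bar : V → V) (m k : ℕ)
    (𝓛 : Set (Set (List V)))
    (hgsm : ∀ (M : GSM V V), ∀ L ∈ 𝓛, M.map L ∈ 𝓛) :
    ∀ L ∈ 𝓛, HIL bar m k L ∈ 𝓛 := by
  intro L hL
  rw [HIL_eq_map_iUnion_hairpinGSM]
  exact hgsm _ L hL

theorem gsm_closed_HIL (bar : V → V) (hbar : ∀ a, bar (bar a) = a) (m k : ℕ) (hm : 1 ≤ m) (hk : 1 ≤ k)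
    (𝓛 : Set (Set (List V)))
    (hgsm : ∀ (M : GSM V V), ∀ L ∈ 𝓛, M.map L ∈ 𝓛) :
    ∀ L ∈ 𝓛, HIL bar m k L ∈ 𝓛 :=
  gsm_closed_HIL_general bar m k 𝓛 hgsm

end Hairpin
end
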